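/- arXiv:2105.13075 — 4 statements merged into one kernel-verified Lean document; each statement's English description precedes it below -/
import Mathlib

section
/- Let W be a Coxeter group with simple reflections s_1, ..., s_r. For each index i define maps u_i^∧, u_i^∨ : W → W by u_i^∧(v) = s_i v if s_i v > v and u_i^∧(v) = v if s_i v < v; and u_i^∨(v) = v if s_i v > v and u_i^∨(v) = s_i v if s_i v < v (lengths compared via the length function ℓ). Then for any two indices i, j such that s_i s_j has finite order n, the maps u_i^∧ and u_j^∧ satisfy the braid relation u_i^∧ u_j^∧ u_i^∧ ··· = u_j^∧ u_i^∧ u_j^∧ ··· (with n factors on each side), and likewise the maps u_i^∨ and u_j^∨ satisfy u_i^∨ u_j^∨ u_i^∨ ··· = u_j^∨ u_i^∨ u_j^∨ ··· (with n factors on each side). -/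
open Polynomial

namespace PaperBase

variable {B : Type*} {W : Type*} [Group W] {M : CoxeterMatrix B} (cs : CoxeterSystem M W)

/-- The strong Bruhat order: `u ≤ w` iff some reduced word for `w` has a sublist that is a
reduced word for `u`. -/
def BruhatLE (u w : W) : Prop :=
  ∃ ω : List B, cs.IsReduced ω ∧ cs.wordProd ω = w ∧
    ∃ ω' : List B, ω'.Sublist ω ∧ cs.IsReduced ω' ∧ cs.wordProd ω' = u

/-- The strict strong Bruhat order. -/
def BruhatLT (u w : W) : Prop := BruhatLE cs u w ∧ u ≠ w

/-- The right weak Bruhat order: `u ≤_R w` iff `ℓ(w) = ℓ(u) + ℓ(u⁻¹ w)`. -/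
def RWeakLE (u w : W) : Prop := cs.length w = cs.length u + cs.length (u⁻¹ * w)

/-- `U_ω ↑ v` along a word `ω`. -/
noncomputable def upLWord (ω : List B) (v : W) : W :=
  ω.foldr (fun i x => if cs.length x < cs.length (cs.simple i * x) then cs.simple i * x else x) v

/-- `U_ω ↓ v` along a word `ω`. -/
noncomputable def downLWord (ω : List B) (v : W) : W :=
  ω.foldr (fun i x => if cs.length (cs.simple i * x) < cs.length x then cs.simple i * x else x) v

/-- `v ↑ U_ω` along a word `ω`. -/
noncomputable def upRWord (v : W) (ω : List B) : W :=
  ω.foldl (fun x i => if cs.length x < cs.length (x * cs.simple i) then x * cs.simple i else x) v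

/-- `v ↓ U_ω` along a word `ω`. -/
noncomputable def downRWord (v : W) (ω : List B) : W :=
  ω.foldl (fun x i => if cs.length (x * cs.simple i) < cs.length x then x * cs.simple i else x) v

/-- A chosen reduced word for `w`. -/
noncomputable def rword (w : W) : List B := (cs.exists_reduced_word' w).choose

theorem rword_isReduced (w : W) : cs.IsReduced (rword cs w) :=
  (cs.exists_reduced_word' w).choose_spec.1

theorem rword_wordProd (w : W) : cs.wordProd (rword cs w) = w :=
  ((cs.exists_reduced_word' w).choose_spec.2).symm

/-- `U_w ↑ v` for `w : W`, computed along a chosen reduced word for `w`. -/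
noncomputable def upL (w v : W) : W := upLWord cs (rword cs w) v

/-- `U_w ↓ v` for `w : W`. -/
noncomputable def downL (w v : W) : W := downLWord cs (rword cs w) v

/-- `v ↑ U_w` for `w : W`. -/
noncomputable def upR (v w : W) : W := upRWord cs v (rword cs w)

/-- `v ↓ U_w` for `w : W`. -/
noncomputable def downR (v w : W) : W := downRWord cs v (rword cs w)

/-- The Demazure (0-Hecke) product `u ∘ w`. -/
noncomputable def dem (u w : W) : W := upRWord cs u (rword cs w)

/-- Left multiplication by the Hecke algebra generator `T_{s i}` on the free
`ℤ[q]`-module with basis `{T_w}`, realized as `W →₀ ℤ[q]`: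
`T_s T_w = T_{sw}` if `sw > w`, and `T_s T_w = (q-1) T_w + q T_{sw}` if `sw < w`. -/
noncomputable def heckeMulSimple (i : B) (f : W →₀ Polynomial ℤ) : W →₀ Polynomial ℤ :=
  f.sum fun w c =>
    if cs.length w < cs.length (cs.simple i * w)
    then Finsupp.single (cs.simple i * w) c
    else Finsupp.single w ((X - 1) * c) + Finsupp.single (cs.simple i * w) (X * c)

/-- Left multiplication by `T_{π ω}` along a word `ω`. -/
noncomputable def heckeMulWord (ω : List B) (f : W →₀ Polynomial ℤ) : W →₀ Polynomial ℤ :=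
  ω.foldr (heckeMulSimple cs) f

/-- The product `T_x T_y` in the Hecke algebra, expanded in the basis `{T_w}`. -/
noncomputable def TT (x y : W) : W →₀ Polynomial ℤ :=
  heckeMulWord cs (rword cs x) (Finsupp.single y 1)

open Classical in
/-- The linear functional `Λ_w` with `Λ_w (T_y) = q^{ℓ(y)}` if `y ≤ w`, else `0`. -/
noncomputable def Lam (w : W) (f : W →₀ Polynomial ℤ) : Polynomial ℤ :=
  f.sum fun y c => if BruhatLE cs y w then X ^ cs.length y * c else 0

/-- `Θ(x, y, w) = Λ_w (T_x T_{y⁻¹})`. -/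
noncomputable def Theta (x y w : W) : Polynomial ℤ := Lam cs w (TT cs x y⁻¹)


/-- The map `u_i^∧`: `v ↦ s_i v` if `s_i v > v`, else `v`. -/
noncomputable def uWedge (i : B) (v : W) : W :=
  if cs.length v < cs.length (cs.simple i * v) then cs.simple i * v else v

/-- The map `u_i^∨`: `v ↦ s_i v` if `s_i v < v`, else `v`. -/
noncomputable def uVee (i : B) (v : W) : W :=
  if cs.length (cs.simple i * v) < cs.length v then cs.simple i * v else v

/-- Alternating composition `f ∘ g ∘ f ∘ ⋯` with `n` factors. -/
def altApply {α : Type*} (f g : α → α) : ℕ → α → α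
  | 0, v => v
  | n + 1, v => f (altApply g f n v)

open CoxeterSystem List

open Classical in
/-- The basic sign-flipping involution on `W × ℤˣ` attached to a simple reflection. -/
noncomputable def etaMap (i : B) : Equiv.Perm (W × ℤˣ) :=
  Function.Involutive.toPerm
    (fun q => (cs.simple i * q.1 * cs.simple i, (if q.1 = cs.simple i then -1 else 1) * q.2))
    (by
      rintro ⟨w, ε⟩
      have hss := cs.simple_mul_simple_self i
      have h : cs.simple i * w * cs.simple i = cs.simple i ↔ w = cs.simple i := by
        constructor
        · intro h
          have := congrArg (fun z => cs.simple i * z * cs.simple i) h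
          calc w = cs.simple i * cs.simple i * w * (cs.simple i * cs.simple i) := by
                rw [hss]; group
          _ = cs.simple i * (cs.simple i * w * cs.simple i) * cs.simple i := by group
          _ = cs.simple i := by rw [h, hss, one_mul]
        · rintro rfl; rw [hss, one_mul]
      have hfst : cs.simple i * (cs.simple i * w * cs.simple i) * cs.simple i = w := by
        calc cs.simple i * (cs.simple i * w * cs.simple i) * cs.simple i
            = (cs.simple i * cs.simple i) * w * (cs.simple i * cs.simple i) := by group
        _ = w := by rw [hss]; simp
      by_cases hw : w = cs.simple i
      · simp only [Prod.mk.injEq]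
        exact ⟨hfst, by rw [if_pos hw, if_pos (h.mpr hw)]; simp⟩
      · simp only [Prod.mk.injEq]
        exact ⟨hfst, by rw [if_neg hw, if_neg (fun hc => hw (h.mp hc))]; simp⟩)

open Classical in
lemma etaMap_apply (i : B) (w : W) (ε : ℤˣ) :
    etaMap cs i (w, ε) = (cs.simple i * w * cs.simple i, (if w = cs.simple i then -1 else 1) * ε) :=
  rfl

open Classical in
lemma etaMap_pow (i j : B) (k : ℕ) (w : W) (ε : ℤˣ) :
    ((etaMap cs i * etaMap cs j) ^ k) (w, ε) =
      ((cs.simple i * cs.simple j) ^ (k : ℤ) * w * (cs.simple i * cs.simple j) ^ (-(k : ℤ)),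
        (∏ r ∈ Finset.range (2 * k),
          (if w = (cs.simple i * cs.simple j) ^ (-(r : ℤ)) * cs.simple j then (-1 : ℤˣ) else 1)) * ε) := by
  set s := cs.simple i
  set t := cs.simple j
  set p := s * t with hp
  have hss : s * s = 1 := cs.simple_mul_simple_self i
  have htt : t * t = 1 := cs.simple_mul_simple_self j
  have hti : t⁻¹ = t := cs.inv_simple j
  have hsi : s⁻¹ = s := cs.inv_simple i
  have htpt : t * p * t⁻¹ = p⁻¹ := by
    rw [hti, hp, mul_inv_rev, hti, hsi]
    calc t * (s * t) * t = t * s * (t * t) := by group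
    _ = t * s := by rw [htt]; simp
  have htp : ∀ a : ℤ, t * p ^ a = p ^ (-a) * t := by
    intro a
    have h2 : t * p ^ a * t⁻¹ = p ^ (-a) := by
      rw [← conj_zpow, htpt, inv_zpow']
    calc t * p ^ a = t * p ^ a * t⁻¹ * t := by group
    _ = p ^ (-a) * t := by rw [h2]
  induction k generalizing w ε with
  | zero => simp
  | succ k ih =>
    have hstep : (etaMap cs i * etaMap cs j) (w, ε) =
        (p * w * p⁻¹,
          (if w = p ^ (-(1:ℤ)) * t then (-1:ℤˣ) else 1) * ((if w = p ^ (-(0:ℤ)) * t then (-1:ℤˣ) else 1) * ε)) := by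
      show etaMap cs i (etaMap cs j (w, ε)) = _
      rw [etaMap_apply, etaMap_apply]
      have hsi : s⁻¹ = s := cs.inv_simple i
      have hti' : t⁻¹ = t := cs.inv_simple j
      have hpm : p ^ (-(1:ℤ)) * t = t * s * t := by
        rw [zpow_neg, zpow_one, hp, mul_inv_rev, hti', hsi]
      have h1 : (t * w * t = s) ↔ (w = p ^ (-(1:ℤ)) * t) := by
        rw [hpm]
        constructor
        · intro h
          calc w = t * (t * w * t) * t := by
                calc w = (t * t) * w * (t * t) := by rw [htt]; simp
                _ = t * (t * w * t) * t := by group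
          _ = t * s * t := by rw [h]
        · rintro rfl
          calc t * (t * s * t) * t = (t * t) * s * (t * t) := by group
          _ = s := by rw [htt]; simp
      have h0 : (w = t) ↔ (w = p ^ (-(0:ℤ)) * t) := by simp
      simp only [Prod.mk.injEq]
      constructor
      · show s * (t * w * t) * s = p * w * p⁻¹
        rw [hp, mul_inv_rev, hti, hsi]; group
      · show (if t * w * t = s then (-1:ℤˣ) else 1) * ((if w = t then (-1:ℤˣ) else 1) * ε) = _
        rw [if_congr h1 rfl rfl, if_congr h0 rfl rfl]
    have hpow : (etaMap cs i * etaMap cs j) ^ (k + 1) = (etaMap cs i * etaMap cs j) ^ k * (etaMap cs i * etaMap cs j) := by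
      rw [pow_succ]
    rw [hpow, Equiv.Perm.mul_apply, hstep, ih]
    simp only [Prod.mk.injEq]
    constructor
    · show p ^ (k:ℤ) * (p * w * p⁻¹) * p ^ (-(k:ℤ)) = p ^ ((k+1 : ℕ) : ℤ) * w * p ^ (-((k+1:ℕ):ℤ))
      push_cast
      rw [zpow_add, zpow_neg, zpow_neg, zpow_add]
      group
    · show (∏ r ∈ Finset.range (2 * k),
          (if p * w * p⁻¹ = p ^ (-(r : ℤ)) * t then (-1 : ℤˣ) else 1)) *
          ((if w = p ^ (-(1:ℤ)) * t then (-1:ℤˣ) else 1) * ((if w = p ^ (-(0:ℤ)) * t then (-1:ℤˣ) else 1) * ε)) = _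
      have e1 : t * p = p ^ (-(1:ℤ)) * t := by
        have := htp 1
        rwa [zpow_one] at this
      have e2 : t * p⁻¹ = p * t := by
        have := htp (-1)
        rwa [zpow_neg_one, neg_neg, zpow_one] at this
      have hc : ∀ r : ℕ, (p * w * p⁻¹ = p ^ (-(r : ℤ)) * t) ↔ (w = p ^ (-((2 + r : ℕ) : ℤ)) * t) := by
        intro r
        constructor
        · intro h
          have hw : w = p⁻¹ * (p ^ (-(r:ℤ)) * t) * p := by
            rw [← h]; group
          rw [hw]
          calc p⁻¹ * (p ^ (-(r:ℤ)) * t) * p = p ^ (-(1:ℤ)) * p ^ (-(r:ℤ)) * (t * p) := by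
                rw [zpow_neg_one]; group
          _ = p ^ (-(1:ℤ)) * p ^ (-(r:ℤ)) * (p ^ (-(1:ℤ)) * t) := by rw [e1]
          _ = p ^ (-(1:ℤ) + -(r:ℤ) + -(1:ℤ)) * t := by rw [zpow_add, zpow_add]; group
          _ = p ^ (-((2 + r : ℕ) : ℤ)) * t := by congr 1; push_cast; ring
        · intro h
          rw [h]
          calc p * (p ^ (-((2 + r : ℕ) : ℤ)) * t) * p⁻¹
              = p ^ (1:ℤ) * p ^ (-((2 + r : ℕ) : ℤ)) * (t * p⁻¹) := by rw [zpow_one]; group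
          _ = p ^ (1:ℤ) * p ^ (-((2 + r : ℕ) : ℤ)) * (p ^ (1:ℤ) * t) := by rw [e2, zpow_one]
          _ = p ^ ((1:ℤ) + -((2 + r : ℕ) : ℤ) + 1) * t := by rw [zpow_add, zpow_add]; group
          _ = p ^ (-(r:ℤ)) * t := by congr 1; push_cast; ring
      have : (∏ r ∈ Finset.range (2 * k),
          (if p * w * p⁻¹ = p ^ (-(r : ℤ)) * t then (-1 : ℤˣ) else 1)) =
          ∏ r ∈ Finset.range (2 * k),
          (if w = p ^ (-((2 + r : ℕ) : ℤ)) * t then (-1 : ℤˣ) else 1) := by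
        refine Finset.prod_congr rfl fun r _ => ?_
        rw [if_congr (hc r) rfl rfl]
      rw [this]
      rw [show 2 * (k + 1) = 2 + 2 * k from by ring, Finset.prod_range_add]
      rw [Finset.prod_range_succ, Finset.prod_range_one]
      push_cast
      ac_rfl

open Classical in
lemma etaMap_liftable : CoxeterMatrix.IsLiftable M (fun i => etaMap cs i) := by
  intro i i'
  apply Equiv.ext
  rintro ⟨w, ε⟩
  set p := cs.simple i * cs.simple i' with hp
  have hpM : p ^ ((M i i' : ℕ) : ℤ) = 1 := by
    rw [zpow_natCast, hp, cs.simple_mul_simple_pow i i']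
  rw [etaMap_pow]
  simp only [Equiv.Perm.one_apply]
  have h1 : p ^ ((M i i' : ℕ) : ℤ) * w * p ^ (-((M i i' : ℕ) : ℤ)) = w := by
    rw [hpM, zpow_neg, hpM]; simp
  have h2 : (∏ r ∈ Finset.range (2 * M i i'),
      (if w = p ^ (-(r : ℤ)) * cs.simple i' then (-1 : ℤˣ) else 1)) = 1 := by
    rw [show 2 * M i i' = M i i' + M i i' from by ring, Finset.prod_range_add,
      ← Finset.prod_mul_distrib]
    apply Finset.prod_eq_one
    intro r _
    have : p ^ (-((M i i' + r : ℕ) : ℤ)) = p ^ (-(r : ℤ)) := by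
      push_cast
      rw [neg_add, zpow_add, zpow_neg, hpM]; simp
    rw [this]
    by_cases hw : w = p ^ (-(r : ℤ)) * cs.simple i'
    · rw [if_pos hw]; simp
    · rw [if_neg hw]; simp
  rw [h1, h2, one_mul]

/-- The sign homomorphism used to detect inversions. -/
noncomputable def phiHom : W →* Equiv.Perm (W × ℤˣ) :=
  cs.lift ⟨fun i => etaMap cs i, etaMap_liftable cs⟩

lemma phiHom_simple (i : B) : phiHom cs (cs.simple i) = etaMap cs i :=
  cs.lift_apply_simple (etaMap_liftable cs) i

/-- The sign `η(u, w)`. -/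
noncomputable def etaSgn (u w : W) : ℤˣ := (phiHom cs u (w, 1)).2

open Classical in
lemma phiHom_apply (u w : W) (ε : ℤˣ) :
    phiHom cs u (w, ε) = (u * w * u⁻¹, etaSgn cs u w * ε) := by
  induction u using cs.simple_induction_left generalizing w ε with
  | one =>
    simp only [map_one, Equiv.Perm.one_apply, etaSgn, map_one, Equiv.Perm.one_apply]
    simp
  | mul_simple_left u i ih =>
    have key : ∀ ε : ℤˣ, phiHom cs (cs.simple i * u) (w, ε) =
        (cs.simple i * u * w * u⁻¹ * cs.simple i,
          (if u * w * u⁻¹ = cs.simple i then (-1:ℤˣ) else 1) * (etaSgn cs u w * ε)) := by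
      intro ε
      rw [map_mul, Equiv.Perm.mul_apply, ih, phiHom_simple, etaMap_apply]
      simp only [Prod.mk.injEq]
      constructor
      · group
      · trivial
    rw [key ε]
    have : etaSgn cs (cs.simple i * u) w =
        (if u * w * u⁻¹ = cs.simple i then (-1:ℤˣ) else 1) * (etaSgn cs u w * 1) := by
      rw [etaSgn, key 1]
    rw [this]
    simp only [Prod.mk.injEq]
    constructor
    · rw [mul_inv_rev, cs.inv_simple]; group
    · simp [mul_assoc]

lemma etaSgn_mul (a b w : W) :
    etaSgn cs (a * b) w = etaSgn cs a (b * w * b⁻¹) * etaSgn cs b w := by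
  have : phiHom cs (a * b) (w, 1) = phiHom cs a (phiHom cs b (w, 1)) := by
    rw [map_mul, Equiv.Perm.mul_apply]
  rw [etaSgn, this, phiHom_apply, phiHom_apply]
  simp

open Classical in
lemma etaSgn_simple (i : B) (w : W) :
    etaSgn cs (cs.simple i) w = if w = cs.simple i then -1 else 1 := by
  rw [etaSgn, phiHom_simple, etaMap_apply]
  simp

open Classical in
lemma etaSgn_wordProd (ω : List B) (w : W) :
    etaSgn cs (cs.wordProd ω) w = (-1) ^ (List.count w (cs.rightInvSeq ω)) := by
  induction ω with
  | nil =>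
    rw [cs.wordProd_nil]
    have : etaSgn cs 1 w = 1 := by
      rw [etaSgn, map_one]; rfl
    simp [this]
  | cons i ω ih =>
    rw [cs.wordProd_cons, etaSgn_mul, ih, etaSgn_simple]
    rw [CoxeterSystem.rightInvSeq, List.count_cons]
    simp only [beq_iff_eq]
    by_cases hw : (cs.wordProd ω)⁻¹ * cs.simple i * cs.wordProd ω = w
    · have hw2 : cs.wordProd ω * w * (cs.wordProd ω)⁻¹ = cs.simple i := by rw [← hw]; group
      rw [if_pos hw, if_pos hw2, pow_add, pow_one]; exact mul_comm _ _
    · have hw2 : ¬ (cs.wordProd ω * w * (cs.wordProd ω)⁻¹ = cs.simple i) := by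
        intro hc; exact hw (by rw [← hc]; group)
      rw [if_neg hw, if_neg hw2, pow_add, pow_zero, one_mul, mul_one]

lemma etaSgn_neg_imp_descent (u : W) (c : B) (h : etaSgn cs u (cs.simple c) = -1) :
    cs.length (u * cs.simple c) < cs.length u := by
  classical
  obtain ⟨ω, hred, hu⟩ := cs.exists_reduced_word' u
  rw [hu] at h ⊢
  rw [etaSgn_wordProd] at h
  have hmem : cs.simple c ∈ cs.rightInvSeq ω := by
    by_contra hns
    rw [List.count_eq_zero_of_not_mem hns, pow_zero] at h
    exact absurd h (by decide)
  exact (cs.isRightInversion_of_mem_rightInvSeq hred hmem).2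

lemma descent_iff_etaSgn_neg (u : W) (c : B) :
    cs.length (u * cs.simple c) < cs.length u ↔ etaSgn cs u (cs.simple c) = -1 := by
  constructor
  · intro h
    rcases Int.units_eq_one_or (etaSgn cs u (cs.simple c)) with h1 | h1
    · exfalso
      have key : etaSgn cs u (cs.simple c) =
          etaSgn cs (u * cs.simple c) (cs.simple c) * etaSgn cs (cs.simple c) (cs.simple c) := by
        conv_lhs => rw [show u = u * cs.simple c * cs.simple c from by simp]
        rw [etaSgn_mul]
        congr 2
        rw [cs.inv_simple]
        calc cs.simple c * cs.simple c * cs.simple c = cs.simple c * (cs.simple c * cs.simple c) := by group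
        _ = cs.simple c := by rw [cs.simple_mul_simple_self]; simp
      rw [h1, etaSgn_simple, if_pos rfl] at key
      have h2 : etaSgn cs (u * cs.simple c) (cs.simple c) = -1 := by
        rcases Int.units_eq_one_or (etaSgn cs (u * cs.simple c) (cs.simple c)) with h2 | h2
        · rw [h2] at key; exact absurd key (by decide)
        · exact h2
      have := etaSgn_neg_imp_descent cs (u * cs.simple c) c h2
      simp only [cs.simple_mul_simple_cancel_right] at this
      omega
    · exact h1
  · exact etaSgn_neg_imp_descent cs u c

/-- Strong exchange (left version, for simple reflections, arbitrary words). -/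
lemma exchange_left (c : B) (ω : List B)
    (h : cs.length (cs.simple c * cs.wordProd ω) < cs.length (cs.wordProd ω)) :
    ∃ idx < ω.length, cs.simple c * cs.wordProd ω = cs.wordProd (ω.eraseIdx idx) := by
  classical
  have h' : cs.length (cs.wordProd ω.reverse * cs.simple c) < cs.length (cs.wordProd ω.reverse) := by
    rw [cs.wordProd_reverse]
    have e : (cs.wordProd ω)⁻¹ * cs.simple c = (cs.simple c * cs.wordProd ω)⁻¹ := by
      rw [mul_inv_rev, cs.inv_simple]
    rw [e, cs.length_inv, cs.length_inv]
    exact h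
  have hneg : etaSgn cs (cs.wordProd ω.reverse) (cs.simple c) = -1 :=
    (descent_iff_etaSgn_neg cs _ c).mp h'
  rw [etaSgn_wordProd] at hneg
  have hmem : cs.simple c ∈ cs.rightInvSeq ω.reverse := by
    by_contra hns
    rw [List.count_eq_zero_of_not_mem hns, pow_zero] at hneg
    exact absurd hneg (by decide)
  rw [cs.rightInvSeq_reverse, List.mem_reverse] at hmem
  obtain ⟨idx, hidx, hval⟩ := List.mem_iff_getElem.mp hmem
  have hlen : idx < ω.length := by
    rw [cs.length_leftInvSeq] at hidx
    exact hidx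
  refine ⟨idx, hlen, ?_⟩
  have hgetD : (cs.leftInvSeq ω).getD idx 1 = cs.simple c := by
    rw [List.getD_eq_getElem _ _ hidx, hval]
  have := cs.getD_leftInvSeq_mul_wordProd ω idx
  rw [hgetD] at this
  exact this

section Dihedral

variable (i j : B)

/-- `p = s i * s j`. -/
noncomputable def pE : W := cs.simple i * cs.simple j

/-- The element of the dihedral "line" at position `x`. -/
noncomputable def EE (x : ℤ) : W :=
  if Even x then (pE cs i j) ^ (x / 2) else cs.simple j * (pE cs i j) ^ ((x - 1) / 2)

/-- The alternating letter at position `x`. -/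
def lamB (x : ℤ) : B := if Even x then j else i

lemma simple_j_mul_pE_zpow (a : ℤ) :
    cs.simple j * (pE cs i j) ^ a = (pE cs i j) ^ (-a) * cs.simple j := by
  set s := cs.simple i
  set t := cs.simple j
  set p := pE cs i j with hp
  have htt : t * t = 1 := cs.simple_mul_simple_self j
  have hti : t⁻¹ = t := cs.inv_simple j
  have hsi : s⁻¹ = s := cs.inv_simple i
  have htpt : t * p * t⁻¹ = p⁻¹ := by
    rw [hti, hp, pE, mul_inv_rev, cs.inv_simple, cs.inv_simple]
    calc t * (s * t) * t = t * s * (t * t) := by group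
    _ = t * s := by rw [htt]; simp
  have h2 : t * p ^ a * t⁻¹ = p ^ (-a) := by
    rw [← conj_zpow, htpt, inv_zpow']
  calc t * p ^ a = t * p ^ a * t⁻¹ * t := by group
  _ = p ^ (-a) * t := by rw [h2]

lemma pE_zpow_mul_simple_j (a : ℤ) :
    (pE cs i j) ^ a * cs.simple j = cs.simple j * (pE cs i j) ^ (-a) := by
  rw [simple_j_mul_pE_zpow, neg_neg]

lemma simple_i_eq_pE_mul_simple_j : cs.simple i = pE cs i j * cs.simple j := by
  rw [pE, mul_assoc, cs.simple_mul_simple_self]; simp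

lemma EE_step (x : ℤ) :
    cs.simple (lamB i j x) * EE cs i j x = EE cs i j (x + 1) := by
  by_cases hx : Even x
  · have hx1 : ¬ Even (x + 1) := by simp [Int.even_add_one, hx]
    rw [lamB, if_pos hx, EE, if_pos hx, EE, if_neg hx1]
    have hx2 : x % 2 = 0 := Int.even_iff.mp hx
    have hred : x + 1 - 1 = x := by ring
    rw [hred]
  · have hx1 : Even (x + 1) := by simpa [Int.even_add_one] using hx
    have hx2 : x % 2 = 1 := Int.not_even_iff.mp hx
    rw [lamB, if_neg hx, EE, if_neg hx, EE, if_pos hx1]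
    rw [← mul_assoc, ← pE]
    rw [show (pE cs i j) * (pE cs i j) ^ ((x - 1) / 2) = (pE cs i j) ^ (1 + (x-1)/2) from by
      rw [zpow_add, zpow_one]]
    congr 1
    omega

lemma EE_step' (x : ℤ) :
    cs.simple (lamB i j (x - 1)) * EE cs i j x = EE cs i j (x - 1) := by
  have h := EE_step cs i j (x - 1)
  rw [sub_add_cancel] at h
  rw [← h, ← mul_assoc, cs.simple_mul_simple_self, one_mul]

lemma EE_succ_eq (x : ℤ) :
    EE cs i j (x + 1) = EE cs i j x * ((pE cs i j) ^ (-x) * cs.simple j) := by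
  set t := cs.simple j
  set p := pE cs i j with hp
  by_cases hx : Even x
  · have hx1 : ¬ Even (x + 1) := by simp [Int.even_add_one, hx]
    have hx2 : x % 2 = 0 := Int.even_iff.mp hx
    rw [EE, if_neg hx1, EE, if_pos hx]
    calc t * p ^ ((x + 1 - 1) / 2) = t * p ^ (x / 2) := by norm_num
    _ = p ^ (-(x/2)) * t := by rw [simple_j_mul_pE_zpow]
    _ = p ^ (x/2) * (p ^ (-x) * t) := by
        rw [← mul_assoc, ← zpow_add]
        congr 2
        omega
  · have hx1 : Even (x + 1) := by simpa [Int.even_add_one] using hx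
    have hx2 : x % 2 = 1 := Int.not_even_iff.mp hx
    rw [EE, if_pos hx1, EE, if_neg hx]
    symm
    calc t * p ^ ((x-1)/2) * (p ^ (-x) * t) = t * (p ^ ((x-1)/2) * p ^ (-x)) * t := by group
    _ = t * p ^ ((x-1)/2 + -x) * t := by rw [zpow_add]
    _ = p ^ (-((x-1)/2 + -x)) * t * t := by rw [simple_j_mul_pE_zpow]
    _ = p ^ (-((x-1)/2 + -x)) * (t * t) := by group
    _ = p ^ (-((x-1)/2 + -x)) := by rw [cs.simple_mul_simple_self]; simp
    _ = p ^ ((x+1)/2) := by congr 1; omega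

lemma EE_mul (a b : ℤ) :
    EE cs i j a * EE cs i j b = EE cs i j (if Even b then a + b else b - a) := by
  set t := cs.simple j
  set p := pE cs i j with hp
  by_cases ha : Even a <;> by_cases hb : Even b <;>
    [(have ha2 : a % 2 = 0 := Int.even_iff.mp ha; have hb2 : b % 2 = 0 := Int.even_iff.mp hb);
     (have ha2 : a % 2 = 0 := Int.even_iff.mp ha; have hb2 : b % 2 = 1 := Int.not_even_iff.mp hb);
     (have ha2 : a % 2 = 1 := Int.not_even_iff.mp ha; have hb2 : b % 2 = 0 := Int.even_iff.mp hb);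
     (have ha2 : a % 2 = 1 := Int.not_even_iff.mp ha; have hb2 : b % 2 = 1 := Int.not_even_iff.mp hb)]
  · have hab : Even (a + b) := ha.add hb
    rw [if_pos hb, EE, if_pos ha, EE, if_pos hb, EE, if_pos hab, ← zpow_add]
    congr 1
    omega
  · have hab : ¬ Even (b - a) := fun hc => hb (by simpa using hc.add ha)
    rw [if_neg hb, EE, if_pos ha, EE, if_neg hb, EE, if_neg hab]
    calc p ^ (a/2) * (t * p ^ ((b-1)/2)) = (p ^ (a/2) * t) * p ^ ((b-1)/2) := by group
    _ = t * p ^ (-(a/2)) * p ^ ((b-1)/2) := by rw [pE_zpow_mul_simple_j]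
    _ = t * p ^ (-(a/2) + (b-1)/2) := by rw [mul_assoc, ← zpow_add]
    _ = t * p ^ ((b - a - 1)/2) := by rw [show -(a/2) + (b-1)/2 = (b - a - 1)/2 from by omega]
  · have hab : ¬ Even (a + b) := fun hc => ha (by simpa using hc.sub hb)
    rw [if_pos hb, EE, if_neg ha, EE, if_pos hb, EE, if_neg hab]
    calc t * p ^ ((a-1)/2) * p ^ (b/2) = t * p ^ ((a-1)/2 + b/2) := by rw [mul_assoc, ← zpow_add]
    _ = t * p ^ ((a + b - 1)/2) := by rw [show (a-1)/2 + b/2 = (a + b - 1)/2 from by omega]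
  · have hab : Even (b - a) := by
      rcases Int.even_or_odd a with h | h
      · exact absurd h ha
      rcases Int.even_or_odd b with h' | h'
      · exact absurd h' hb
      exact h'.sub_odd h
    rw [if_neg hb, EE, if_neg ha, EE, if_neg hb, EE, if_pos hab]
    calc t * p ^ ((a-1)/2) * (t * p ^ ((b-1)/2))
        = t * (p ^ ((a-1)/2) * t) * p ^ ((b-1)/2) := by group
    _ = t * (t * p ^ (-((a-1)/2))) * p ^ ((b-1)/2) := by rw [pE_zpow_mul_simple_j]
    _ = (t * t) * (p ^ (-((a-1)/2)) * p ^ ((b-1)/2)) := by group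
    _ = p ^ (-((a-1)/2) + (b-1)/2) := by rw [cs.simple_mul_simple_self, one_mul, ← zpow_add]
    _ = p ^ ((b - a)/2) := by congr 1; omega

lemma EE_swap (x : ℤ) : EE cs j i x = EE cs i j (-x) := by
  have hpinv : pE cs j i = (pE cs i j)⁻¹ := by
    rw [pE, pE, mul_inv_rev, cs.inv_simple, cs.inv_simple]
  by_cases hx : Even x
  · have hx2 : x % 2 = 0 := Int.even_iff.mp hx
    have hx' : Even (-x) := hx.neg
    rw [EE, if_pos hx, EE, if_pos hx', hpinv, inv_zpow, ← zpow_neg]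
    congr 1
    omega
  · have hx2 : x % 2 = 1 := Int.not_even_iff.mp hx
    have hx' : ¬ Even (-x) := fun hc => hx (by simpa using hc.neg)
    rw [EE, if_neg hx, EE, if_neg hx', hpinv, inv_zpow, ← zpow_neg]
    rw [simple_i_eq_pE_mul_simple_j cs i j]
    calc pE cs i j * cs.simple j * (pE cs i j) ^ (-((x-1)/2))
        = pE cs i j * (cs.simple j * (pE cs i j) ^ (-((x-1)/2))) := by group
    _ = pE cs i j * ((pE cs i j) ^ ((x-1)/2) * cs.simple j) := by rw [simple_j_mul_pE_zpow, neg_neg]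
    _ = (pE cs i j) ^ (1 + (x-1)/2) * cs.simple j := by rw [← mul_assoc, ← zpow_one_add]
    _ = (pE cs i j) ^ (-((-x-1)/2)) * cs.simple j := by congr 2; omega
    _ = cs.simple j * (pE cs i j) ^ ((-x-1)/2) := by rw [← simple_j_mul_pE_zpow]

lemma EE_congr {x y : ℤ} (h : (2 * (orderOf (pE cs i j)) : ℤ) ∣ (x - y)) :
    EE cs i j x = EE cs i j y := by
  set p := pE cs i j with hp
  set n := orderOf p with hn
  have hdvd : ∀ a b : ℤ, (n:ℤ) ∣ (a - b) → p ^ a = p ^ b := by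
    intro a b hab
    have : p ^ (a - b) = 1 := by
      rw [← orderOf_dvd_iff_zpow_eq_one]; exact hab
    calc p ^ a = p ^ (a - b + b) := by congr 1; ring
    _ = p ^ (a - b) * p ^ b := by rw [zpow_add]
    _ = p ^ b := by rw [this, one_mul]
  obtain ⟨m, hm⟩ := h
  set c : ℤ := (n : ℤ) * m with hc
  have hxy : x - y = 2 * c := by rw [hm]; ring
  have hpar : Even x ↔ Even y := by
    have hexy : Even (x - y) := ⟨c, by omega⟩
    rcases Int.even_or_odd x with hx | hx <;> rcases Int.even_or_odd y with hy | hy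
    · exact ⟨fun _ => hy, fun _ => hx⟩
    · exfalso
      have := Int.even_iff.mp hexy
      have h1 := Int.even_iff.mp hx
      have h2 := Int.odd_iff.mp hy
      omega
    · exfalso
      have := Int.even_iff.mp hexy
      have h1 := Int.odd_iff.mp hx
      have h2 := Int.even_iff.mp hy
      omega
    · exact ⟨fun hc' => absurd hc' (Int.not_even_iff_odd.mpr hx),
        fun hc' => absurd hc' (Int.not_even_iff_odd.mpr hy)⟩
  by_cases hx : Even x
  · have hy : Even y := hpar.mp hx
    have hx2 := Int.even_iff.mp hx
    have hy2 := Int.even_iff.mp hy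
    rw [EE, if_pos hx, EE, if_pos hy]
    apply hdvd
    exact ⟨m, by omega⟩
  · have hy : ¬ Even y := fun hcc => hx (hpar.mpr hcc)
    have hx2 := Int.not_even_iff.mp hx
    have hy2 := Int.not_even_iff.mp hy
    rw [EE, if_neg hx, EE, if_neg hy]
    congr 1
    apply hdvd
    exact ⟨m, by omega⟩

lemma wordProd_alternatingWord_eq_EE (k : ℕ) :
    cs.wordProd (CoxeterSystem.alternatingWord i j k) = EE cs i j (k : ℤ) := by
  rw [cs.prod_alternatingWord_eq_mul_pow]
  by_cases hk : Even k
  · have hk' : Even (k : ℤ) := (Int.even_coe_nat k).mpr hk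
    have hk2 := Nat.even_iff.mp hk
    rw [if_pos hk, EE, if_pos hk', one_mul, ← zpow_natCast, ← pE,
      show ((k:ℤ))/2 = ((k/2 : ℕ) : ℤ) from by omega]
  · have hk' : ¬ Even (k : ℤ) := fun hc => hk ((Int.even_coe_nat k).mp hc)
    have hk2 := Nat.odd_iff.mp (Nat.not_even_iff_odd.mp hk)
    rw [if_neg hk, EE, if_neg hk', ← zpow_natCast, ← pE,
      show ((k:ℤ)-1)/2 = ((k/2 : ℕ) : ℤ) from by omega]

lemma alternatingWord_drop (m k : ℕ) :
    (CoxeterSystem.alternatingWord i j k).drop m = CoxeterSystem.alternatingWord i j (k - m) := by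
  induction m generalizing k with
  | zero => simp
  | succ m ih =>
    cases k with
    | zero => simp [CoxeterSystem.alternatingWord]
    | succ k =>
      rw [CoxeterSystem.alternatingWord_succ' i j k, List.drop_succ_cons, ih]
      congr 1
      omega

lemma wordProd_alternatingWord_eraseIdx (k idx : ℕ) (hidx : idx < k) :
    cs.wordProd ((CoxeterSystem.alternatingWord i j k).eraseIdx idx) =
      EE cs i j (k : ℤ) * ((pE cs i j) ^ (-((k - idx - 1 : ℕ) : ℤ)) * cs.simple j) := by
  set l : ℕ := k - idx - 1 with hl
  rw [List.eraseIdx_eq_take_drop_succ, cs.wordProd_append]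
  have hdrop1 : cs.wordProd ((CoxeterSystem.alternatingWord i j k).drop (idx + 1)) =
      EE cs i j (l : ℤ) := by
    rw [alternatingWord_drop, show k - (idx + 1) = l from by omega,
      wordProd_alternatingWord_eq_EE]
  have htd : cs.wordProd ((CoxeterSystem.alternatingWord i j k).take idx) *
      cs.wordProd ((CoxeterSystem.alternatingWord i j k).drop idx) = EE cs i j (k : ℤ) := by
    rw [← cs.wordProd_append, List.take_append_drop, wordProd_alternatingWord_eq_EE]
  have hdrop : cs.wordProd ((CoxeterSystem.alternatingWord i j k).drop idx) =
      EE cs i j ((l : ℤ) + 1) := by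
    rw [alternatingWord_drop, wordProd_alternatingWord_eq_EE]
    congr 1
    omega
  have htake : cs.wordProd ((CoxeterSystem.alternatingWord i j k).take idx) =
      EE cs i j (k : ℤ) * (EE cs i j ((l : ℤ) + 1))⁻¹ := by
    apply eq_mul_inv_of_mul_eq
    rw [← hdrop]
    exact htd
  rw [htake, hdrop1, EE_succ_eq]
  rw [mul_inv_rev]
  calc EE cs i j (k:ℤ) * (((pE cs i j) ^ (-(l:ℤ)) * cs.simple j)⁻¹ * (EE cs i j (l:ℤ))⁻¹) *
        EE cs i j (l:ℤ)
      = EE cs i j (k:ℤ) * ((pE cs i j) ^ (-(l:ℤ)) * cs.simple j)⁻¹ := by group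
  _ = EE cs i j (k:ℤ) * ((pE cs i j) ^ (-(l:ℤ)) * cs.simple j) := by
      congr 1
      rw [mul_inv_rev, cs.inv_simple, ← zpow_neg, neg_neg, pE_zpow_mul_simple_j, neg_neg]

lemma EE_odd_form (k : ℕ) :
    EE cs i j (2 * (k:ℤ) + 1) = (pE cs i j) ^ (-(k:ℤ)) * cs.simple j := by
  have hodd : ¬ Even (2 * (k:ℤ) + 1) := by
    simp [Int.even_add_one, parity_simps]
  rw [EE, if_neg hodd, show (2*(k:ℤ)+1-1)/2 = (k:ℤ) from by omega, simple_j_mul_pE_zpow]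

lemma lenAdd (u : W) (ρ : List B) (hρred : cs.IsReduced ρ) (hρ : cs.wordProd ρ = u)
    (hmin : ∀ x : ℤ, cs.length u ≤ cs.length (EE cs i j x * u)) :
    ∀ k : ℕ, k ≤ orderOf (pE cs i j) → cs.length (EE cs i j (k : ℤ) * u) = k + cs.length u := by
  intro k
  induction k with
  | zero =>
    intro _
    rw [show ((0:ℕ):ℤ) = 0 from rfl, EE, if_pos (by decide : Even (0:ℤ))]
    simp
  | succ k ih =>
    intro hk
    have IH := ih (by omega)
    have hcast : ((k+1 : ℕ) : ℤ) = (k : ℤ) + 1 := by push_cast; ring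
    have hstep : cs.simple (lamB i j (k:ℤ)) * EE cs i j (k:ℤ) = EE cs i j ((k:ℤ)+1) :=
      EE_step cs i j (k:ℤ)
    rcases cs.length_simple_mul (EE cs i j (k:ℤ) * u) (lamB i j (k:ℤ)) with hup | hdown
    · rw [hcast, ← hstep, mul_assoc, hup, IH]
      omega
    · exfalso
      have hlt : cs.length (cs.simple (lamB i j (k:ℤ)) * (EE cs i j (k:ℤ) * u)) <
          cs.length (EE cs i j (k:ℤ) * u) := by
        have hne := cs.length_simple_mul_ne (EE cs i j (k:ℤ) * u) (lamB i j (k:ℤ))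
        omega
      have hprod : cs.wordProd (CoxeterSystem.alternatingWord i j k ++ ρ) =
          EE cs i j (k:ℤ) * u := by
        rw [cs.wordProd_append, wordProd_alternatingWord_eq_EE, hρ]
      obtain ⟨idx, hidx, heq⟩ := exchange_left cs (lamB i j (k:ℤ))
        (CoxeterSystem.alternatingWord i j k ++ ρ) (by rw [hprod]; exact hlt)
      rw [hprod] at heq
      have hlenalt : (CoxeterSystem.alternatingWord i j k).length = k :=
        CoxeterSystem.length_alternatingWord i j k
      have hlenρ : ρ.length = cs.length u := by
        have := hρred
        rw [CoxeterSystem.IsReduced, hρ] at this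
        omega
      have hLHS : cs.simple (lamB i j (k:ℤ)) * (EE cs i j (k:ℤ) * u) =
          EE cs i j (k:ℤ) * (((pE cs i j) ^ (-(k:ℤ)) * cs.simple j) * u) := by
        rw [← mul_assoc, hstep, EE_succ_eq, mul_assoc]
      by_cases hcase : idx < k
      · rw [List.eraseIdx_append_of_lt_length (by omega) ρ, cs.wordProd_append,
          wordProd_alternatingWord_eraseIdx cs i j k idx hcase, hρ] at heq
        have hcancel : (pE cs i j) ^ (-(k:ℤ)) = (pE cs i j) ^ (-((k - idx - 1 : ℕ) : ℤ)) := by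
          have h1 : EE cs i j (k:ℤ) * (pE cs i j) ^ (-(k:ℤ)) * (cs.simple j * u)
              = EE cs i j (k:ℤ) * (pE cs i j) ^ (-((k - idx - 1 : ℕ) : ℤ)) * (cs.simple j * u) := by
            calc EE cs i j (k:ℤ) * (pE cs i j) ^ (-(k:ℤ)) * (cs.simple j * u)
                = cs.simple (lamB i j (k:ℤ)) * (EE cs i j (k:ℤ) * u) := by rw [hLHS]; group
            _ = EE cs i j (k:ℤ) * ((pE cs i j) ^ (-((k - idx - 1 : ℕ) : ℤ)) * cs.simple j) * u :=
                heq
            _ = EE cs i j (k:ℤ) * (pE cs i j) ^ (-((k - idx - 1 : ℕ) : ℤ)) * (cs.simple j * u) :=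
                by group
          exact mul_left_cancel (mul_right_cancel h1)
        have hone : (pE cs i j) ^ (((k:ℤ) - ((k - idx - 1 : ℕ) : ℤ))) = 1 := by
          calc (pE cs i j) ^ (((k:ℤ) - ((k - idx - 1 : ℕ) : ℤ)))
              = (pE cs i j) ^ (k:ℤ) * (pE cs i j) ^ (-((k - idx - 1 : ℕ) : ℤ)) := by
                rw [← zpow_add, sub_eq_add_neg]
          _ = (pE cs i j) ^ (k:ℤ) * (pE cs i j) ^ (-(k:ℤ)) := by rw [← hcancel]
          _ = 1 := by rw [← zpow_add]; simp
        have hdvd : ((orderOf (pE cs i j) : ℕ) : ℤ) ∣ ((k:ℤ) - ((k - idx - 1 : ℕ) : ℤ)) :=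
          orderOf_dvd_iff_zpow_eq_one.mpr hone
        have hposd : (0:ℤ) < (k:ℤ) - ((k - idx - 1 : ℕ) : ℤ) := by omega
        have hled := Int.le_of_dvd hposd hdvd
        omega
      · rw [List.eraseIdx_append_of_length_le (by omega) ρ, cs.wordProd_append,
          wordProd_alternatingWord_eq_EE] at heq
        rw [hLHS] at heq
        have h2 : ((pE cs i j) ^ (-(k:ℤ)) * cs.simple j) * u =
            cs.wordProd (ρ.eraseIdx (idx - (CoxeterSystem.alternatingWord i j k).length)) :=
          mul_left_cancel heq
        have hidx2 : idx - (CoxeterSystem.alternatingWord i j k).length < ρ.length := by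
          rw [List.length_append] at hidx
          omega
        have hshort : cs.length (((pE cs i j) ^ (-(k:ℤ)) * cs.simple j) * u) ≤
            ρ.length - 1 := by
          rw [h2]
          calc cs.length (cs.wordProd (ρ.eraseIdx (idx - (CoxeterSystem.alternatingWord i j k).length)))
              ≤ (ρ.eraseIdx (idx - (CoxeterSystem.alternatingWord i j k).length)).length :=
                cs.length_wordProd_le _
          _ = ρ.length - 1 := List.length_eraseIdx_of_lt hidx2
        have hm := hmin (2 * (k:ℤ) + 1)
        rw [EE_odd_form] at hm
        omega

lemma length_EE_mul (u : W) (hmin : ∀ x : ℤ, cs.length u ≤ cs.length (EE cs i j x * u))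
    (x : ℤ) (hx : x.natAbs ≤ orderOf (pE cs i j)) :
    cs.length (EE cs i j x * u) = x.natAbs + cs.length u := by
  obtain ⟨ρ, hρred, hρ⟩ := cs.exists_reduced_word' u
  rcases le_or_gt 0 x with hx0 | hx0
  · have hxx : x = ((x.natAbs : ℕ) : ℤ) := by omega
    rw [hxx]
    exact lenAdd cs i j u ρ hρred hρ.symm hmin x.natAbs hx
  · have hswap : EE cs i j x = EE cs j i (-x) := by rw [EE_swap cs j i x]
    have hord : orderOf (pE cs j i) = orderOf (pE cs i j) := by
      have : pE cs j i = (pE cs i j)⁻¹ := by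
        rw [pE, pE, mul_inv_rev, cs.inv_simple, cs.inv_simple]
      rw [this, orderOf_inv]
    have hmin' : ∀ y : ℤ, cs.length u ≤ cs.length (EE cs j i y * u) := by
      intro y
      rw [EE_swap cs i j y]
      exact hmin (-y)
    have hxx : -x = (((-x).natAbs : ℕ) : ℤ) := by omega
    have hna : (-x).natAbs = x.natAbs := by omega
    rw [hswap, hxx]
    rw [lenAdd cs j i u ρ hρred hρ.symm hmin' (-x).natAbs (by omega)]
    omega

/-- Whether applying `u_c^∧` at position `x` moves up. -/
def readyUp (x : ℤ) (c : B) : Prop :=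
  (0 ≤ x ∧ c = lamB i j x) ∨ (x ≤ 0 ∧ c = lamB i j (x - 1))

/-- Whether applying `u_c^∨` at position `x` moves down. -/
def readyDown (x : ℤ) (c : B) : Prop :=
  x ≠ 0 ∧ ((0 < x ∧ c = lamB i j (x-1)) ∨ (x < 0 ∧ c = lamB i j x) ∨
    x.natAbs = orderOf (pE cs i j))

lemma lamB_congr {x y : ℤ} (h : x % 2 = y % 2) : lamB i j x = lamB i j y := by
  have : Even x ↔ Even y := by rw [Int.even_iff, Int.even_iff, h]
  by_cases hx : Even x
  · rw [lamB, lamB, if_pos hx, if_pos (this.mp hx)]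
  · rw [lamB, lamB, if_neg hx, if_neg (fun hc => hx (this.mpr hc))]

lemma lamB_ne (hij : i ≠ j) (x : ℤ) : lamB i j x ≠ lamB i j (x + 1) := by
  by_cases hx : Even x
  · have hx1 : ¬ Even (x+1) := by simp [Int.even_add_one, hx]
    rw [lamB, lamB, if_pos hx, if_neg hx1]
    exact fun h => hij h.symm
  · have hx1 : Even (x+1) := by simpa [Int.even_add_one] using hx
    rw [lamB, lamB, if_neg hx, if_pos hx1]
    exact hij

lemma lamB_mem {c : B} (hc : c = i ∨ c = j) (x : ℤ) :
    c = lamB i j x ∨ c = lamB i j (x - 1) := by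
  by_cases hx : Even x
  · have hx1 : ¬ Even (x - 1) := fun hcon => (Int.even_sub_one.mp hcon) hx
    rw [lamB, lamB, if_pos hx, if_neg hx1]
    exact hc.symm
  · have hx1 : Even (x - 1) := Int.even_sub_one.mpr hx
    rw [lamB, lamB, if_neg hx, if_pos hx1]
    exact hc

lemma readyUp_zero {c : B} (hc : c = i ∨ c = j) : readyUp i j 0 c := by
  rcases lamB_mem i j hc 0 with h | h
  · exact Or.inl ⟨le_refl 0, h⟩
  · exact Or.inr ⟨le_refl 0, by simpa using h⟩

section Dyn

variable (u : W)

/-- Stay at the top: `u_c^∧` fixes the top element. -/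
lemma upFix (hmin : ∀ x : ℤ, cs.length u ≤ cs.length (EE cs i j x * u))
    (hn2 : 2 ≤ orderOf (pE cs i j))
    (x : ℤ) (hx : x.natAbs = orderOf (pE cs i j)) {c : B} (hc : c = i ∨ c = j) :
    uWedge cs c (EE cs i j x * u) = EE cs i j x * u := by
  set n := orderOf (pE cs i j) with hn
  have hlx : cs.length (EE cs i j x * u) = n + cs.length u := by
    rw [length_EE_mul cs i j u hmin x (by omega), hx]
  have key : ∀ y : ℤ, cs.simple c * (EE cs i j x * u) = EE cs i j y * u →
      y.natAbs ≤ n → y.natAbs = n - 1 →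
      uWedge cs c (EE cs i j x * u) = EE cs i j x * u := by
    intro y hy hy1 hy2
    have hly : cs.length (EE cs i j y * u) = (n - 1) + cs.length u := by
      rw [length_EE_mul cs i j u hmin y hy1, hy2]
    rw [uWedge, if_neg]
    rw [hy, hly, hlx]
    omega
  have hxcase : x = (n : ℤ) ∨ x = -(n : ℤ) := by
    rcases Int.natAbs_eq x with h | h
    · left; rw [h, hx]
    · right; rw [h, hx]
  rcases lamB_mem i j hc x with hcl | hcl
  · -- c = lamB x : step up to x + 1, which is one below the top on the other side
    have hstep : cs.simple c * (EE cs i j x * u) = EE cs i j (x+1) * u := by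
      rw [← mul_assoc, hcl, EE_step]
    rcases hxcase with h | h
    · -- x = n : x + 1 ≡ 1 - n
      have hcong : EE cs i j (x+1) = EE cs i j (1 - (n:ℤ)) := by
        apply EE_congr
        exact ⟨1, by omega⟩
      refine key (1 - (n:ℤ)) ?_ (by omega) (by omega)
      rw [hstep, hcong]
    · refine key (x + 1) ?_ (by omega) (by omega)
      exact hstep
  · -- c = lamB (x-1) : step down to x - 1
    have hstep : cs.simple c * (EE cs i j x * u) = EE cs i j (x-1) * u := by
      rw [← mul_assoc, hcl, EE_step']
    rcases hxcase with h | h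
    · refine key (x - 1) ?_ (by omega) (by omega)
      exact hstep
    · have hcong : EE cs i j (x-1) = EE cs i j ((n:ℤ) - 1) := by
        apply EE_congr
        exact ⟨-1, by omega⟩
      refine key ((n:ℤ) - 1) ?_ (by omega) (by omega)
      rw [hstep, hcong]

/-- Moving up. -/
lemma upMove (hmin : ∀ x : ℤ, cs.length u ≤ cs.length (EE cs i j x * u))
    (hij : i ≠ j)
    (x : ℤ) (hx : x.natAbs < orderOf (pE cs i j)) {c : B} (hc : c = i ∨ c = j)
    (hready : readyUp i j x c) :
    ∃ y : ℤ, uWedge cs c (EE cs i j x * u) = EE cs i j y * u ∧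
      y.natAbs = x.natAbs + 1 ∧ y.natAbs ≤ orderOf (pE cs i j) ∧
      ∀ c', (c' = i ∨ c' = j) → c' ≠ c → readyUp i j y c' := by
  set n := orderOf (pE cs i j) with hn
  have hlx : cs.length (EE cs i j x * u) = x.natAbs + cs.length u :=
    length_EE_mul cs i j u hmin x (by omega)
  rcases hready with ⟨hx0, hcl⟩ | ⟨hx0, hcl⟩
  · refine ⟨x + 1, ?_, by omega, by omega, ?_⟩
    · have hstep : cs.simple c * (EE cs i j x * u) = EE cs i j (x+1) * u := by
        rw [← mul_assoc, hcl, EE_step]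
      have hly : cs.length (EE cs i j (x+1) * u) = (x+1).natAbs + cs.length u :=
        length_EE_mul cs i j u hmin (x+1) (by omega)
      rw [uWedge, if_pos, hstep]
      rw [hstep, hlx, hly]
      omega
    · intro c' hc' hne
      rcases lamB_mem i j hc' (x+1) with h | h
      · exact Or.inl ⟨by omega, h⟩
      · exfalso
        apply hne
        rw [h, show x + 1 - 1 = x from by ring, ← hcl]
  · refine ⟨x - 1, ?_, by omega, by omega, ?_⟩
    · have hstep : cs.simple c * (EE cs i j x * u) = EE cs i j (x-1) * u := by
        rw [← mul_assoc, hcl, EE_step']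
      have hly : cs.length (EE cs i j (x-1) * u) = (x-1).natAbs + cs.length u :=
        length_EE_mul cs i j u hmin (x-1) (by omega)
      rw [uWedge, if_pos, hstep]
      rw [hstep, hlx, hly]
      omega
    · intro c' hc' hne
      rcases lamB_mem i j hc' (x-1) with h | h
      · exfalso
        apply hne
        rw [h, ← hcl]
      · exact Or.inr ⟨by omega, h⟩

/-- Stalling. -/
lemma upStall (hmin : ∀ x : ℤ, cs.length u ≤ cs.length (EE cs i j x * u))
    (hij : i ≠ j)
    (x : ℤ) (hx : x.natAbs ≤ orderOf (pE cs i j)) {c : B} (hc : c = i ∨ c = j)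
    (hnready : ¬ readyUp i j x c) :
    uWedge cs c (EE cs i j x * u) = EE cs i j x * u ∧
      ∀ c', (c' = i ∨ c' = j) → c' ≠ c → readyUp i j x c' := by
  set n := orderOf (pE cs i j) with hn
  rw [readyUp, not_or, not_and_or, not_and_or] at hnready
  obtain ⟨h1, h2⟩ := hnready
  have hlx : cs.length (EE cs i j x * u) = x.natAbs + cs.length u :=
    length_EE_mul cs i j u hmin x (by omega)
  rcases lt_trichotomy x 0 with hx0 | hx0 | hx0
  · -- x < 0 : c must be lamB x, it moves toward 0, so stall
    have hcl : c = lamB i j x := by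
      rcases lamB_mem i j hc x with h | h
      · exact h
      · exfalso
        rcases h2 with h2 | h2
        · omega
        · exact h2 h
    have hstep : cs.simple c * (EE cs i j x * u) = EE cs i j (x+1) * u := by
      rw [← mul_assoc, hcl, EE_step]
    have hly : cs.length (EE cs i j (x+1) * u) = (x+1).natAbs + cs.length u :=
      length_EE_mul cs i j u hmin (x+1) (by omega)
    constructor
    · rw [uWedge, if_neg]
      rw [hstep, hlx, hly]
      omega
    · intro c' hc' hne
      rcases lamB_mem i j hc' x with h | h
      · exact absurd (h.trans hcl.symm) hne
      · exact Or.inr ⟨by omega, h⟩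
  · exfalso
    subst hx0
    rcases lamB_mem i j hc 0 with h | h
    · rcases h1 with h1 | h1
      · omega
      · exact h1 h
    · rcases h2 with h2 | h2
      · omega
      · exact h2 h
  · have hcl : c = lamB i j (x - 1) := by
      rcases lamB_mem i j hc x with h | h
      · exfalso
        rcases h1 with h1 | h1
        · omega
        · exact h1 h
      · exact h
    have hstep : cs.simple c * (EE cs i j x * u) = EE cs i j (x-1) * u := by
      rw [← mul_assoc, hcl, EE_step']
    have hly : cs.length (EE cs i j (x-1) * u) = (x-1).natAbs + cs.length u :=
      length_EE_mul cs i j u hmin (x-1) (by omega)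
    constructor
    · rw [uWedge, if_neg]
      rw [hstep, hlx, hly]
      omega
    · intro c' hc' hne
      rcases lamB_mem i j hc' x with h | h
      · exact Or.inl ⟨by omega, h⟩
      · exact absurd (h.trans hcl.symm) hne

/-- `u_c^∨` fixes the bottom element. -/
lemma downFixZero (hmin : ∀ x : ℤ, cs.length u ≤ cs.length (EE cs i j x * u))
    (hn2 : 2 ≤ orderOf (pE cs i j)) {c : B} (hc : c = i ∨ c = j) :
    uVee cs c (EE cs i j 0 * u) = EE cs i j 0 * u := by
  have hl0 : cs.length (EE cs i j 0 * u) = cs.length u := by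
    have := length_EE_mul cs i j u hmin 0 (by omega)
    simpa using this
  rcases lamB_mem i j hc 0 with hcl | hcl
  · have hstep : cs.simple c * (EE cs i j 0 * u) = EE cs i j 1 * u := by
      rw [← mul_assoc, hcl]
      rw [show (1:ℤ) = 0 + 1 from by ring, ← EE_step]
    have hl1 : cs.length (EE cs i j 1 * u) = 1 + cs.length u :=
      length_EE_mul cs i j u hmin 1 (by omega)
    rw [uVee, if_neg]
    rw [hstep, hl0, hl1]
    omega
  · have hstep : cs.simple c * (EE cs i j 0 * u) = EE cs i j (-1) * u := by
      rw [← mul_assoc, hcl]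
      rw [show (-1:ℤ) = 0 - 1 from by ring, ← EE_step']
    have hl1 : cs.length (EE cs i j (-1) * u) = 1 + cs.length u :=
      length_EE_mul cs i j u hmin (-1) (by omega)
    rw [uVee, if_neg]
    rw [hstep, hl0, hl1]
    omega

/-- Moving down. -/
lemma downMove (hmin : ∀ x : ℤ, cs.length u ≤ cs.length (EE cs i j x * u))
    (hij : i ≠ j) (hn2 : 2 ≤ orderOf (pE cs i j))
    (x : ℤ) (hx : x.natAbs ≤ orderOf (pE cs i j)) {c : B} (hc : c = i ∨ c = j)
    (hready : readyDown cs i j x c) :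
    ∃ y : ℤ, uVee cs c (EE cs i j x * u) = EE cs i j y * u ∧
      y.natAbs + 1 = x.natAbs ∧ y.natAbs ≤ orderOf (pE cs i j) ∧
      ∀ c', (c' = i ∨ c' = j) → c' ≠ c → (y = 0 ∨ readyDown cs i j y c') := by
  set n := orderOf (pE cs i j) with hn
  obtain ⟨hx0, hdisj⟩ := hready
  have hlx : cs.length (EE cs i j x * u) = x.natAbs + cs.length u :=
    length_EE_mul cs i j u hmin x (by omega)
  have move : ∀ y : ℤ, cs.simple c * (EE cs i j x * u) = EE cs i j y * u →
      y.natAbs + 1 = x.natAbs →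
      uVee cs c (EE cs i j x * u) = EE cs i j y * u := by
    intro y hy hy1
    have hly : cs.length (EE cs i j y * u) = y.natAbs + cs.length u :=
      length_EE_mul cs i j u hmin y (by omega)
    rw [uVee, if_pos, hy]
    rw [hy, hly, hlx]
    omega
  rcases lamB_mem i j hc x with hcl | hcl
  · -- c = lamB x
    rcases lt_trichotomy x 0 with hxs | hxs | hxs
    · -- x < 0 : move to x + 1
      refine ⟨x + 1, ?_, by omega, by omega, ?_⟩
      · apply move
        · rw [← mul_assoc, hcl, EE_step]
        · omega
      · intro c' hc' hne
        by_cases hy0 : x + 1 = 0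
        · exact Or.inl hy0
        · refine Or.inr ⟨hy0, Or.inr (Or.inl ⟨by omega, ?_⟩)⟩
          rcases lamB_mem i j hc' (x+1) with h | h
          · exact h
          · exact absurd (h.trans (by rw [show x + 1 - 1 = x from by ring, ← hcl]))
              hne
    · exact absurd hxs hx0
    · -- x > 0 with c = lamB x : must be the top, x = n; move to 1 - n
      have hxn : x = (n:ℤ) := by
        rcases hdisj with h | h | h
        · exfalso
          have := lamB_ne i j hij (x-1)
          rw [show x - 1 + 1 = x from by ring] at this
          exact this (h.2.symm.trans hcl)
        · omega
        · omega
      refine ⟨1 - (n:ℤ), ?_, by omega, by omega, ?_⟩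
      · apply move
        · rw [← mul_assoc, hcl, EE_step]
          rw [show EE cs i j (x + 1) = EE cs i j (1 - (n:ℤ)) from
            EE_congr cs i j ⟨1, by omega⟩]
        · omega
      · intro c' hc' hne
        refine Or.inr ⟨by omega, Or.inr (Or.inl ⟨by omega, ?_⟩)⟩
        have hc'l : c' = lamB i j (x - 1) := by
          rcases lamB_mem i j hc' x with h | h
          · exact absurd (h.trans hcl.symm) hne
          · exact h
        rw [hc'l]
        apply lamB_congr
        omega
  · -- c = lamB (x - 1)
    rcases lt_trichotomy x 0 with hxs | hxs | hxs
    · -- x < 0 with c = lamB (x-1) : must be bottom-top, x = -n; move to n - 1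
      have hxn : x = -(n:ℤ) := by
        rcases hdisj with h | h | h
        · omega
        · exfalso
          have := lamB_ne i j hij (x-1)
          rw [show x - 1 + 1 = x from by ring] at this
          exact this (hcl.symm.trans h.2)
        · omega
      refine ⟨(n:ℤ) - 1, ?_, by omega, by omega, ?_⟩
      · apply move
        · rw [← mul_assoc, hcl, EE_step']
          rw [show EE cs i j (x - 1) = EE cs i j ((n:ℤ) - 1) from
            EE_congr cs i j ⟨-1, by omega⟩]
        · omega
      · intro c' hc' hne
        refine Or.inr ⟨by omega, Or.inl ⟨by omega, ?_⟩⟩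
        have hc'l : c' = lamB i j x := by
          rcases lamB_mem i j hc' x with h | h
          · exact h
          · exact absurd (h.trans hcl.symm) hne
        rw [hc'l]
        apply lamB_congr
        omega
    · exact absurd hxs hx0
    · -- x > 0 : move to x - 1
      refine ⟨x - 1, ?_, by omega, by omega, ?_⟩
      · apply move
        · rw [← mul_assoc, hcl, EE_step']
        · omega
      · intro c' hc' hne
        by_cases hy0 : x - 1 = 0
        · exact Or.inl hy0
        · refine Or.inr ⟨hy0, Or.inl ⟨by omega, ?_⟩⟩
          have hc'l : c' = lamB i j x := by
            rcases lamB_mem i j hc' x with h | h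
            · exact h
            · exact absurd (h.trans hcl.symm) hne
          rw [hc'l]
          apply lamB_congr
          omega

/-- Stalling for `u^∨`. -/
lemma downStall (hmin : ∀ x : ℤ, cs.length u ≤ cs.length (EE cs i j x * u))
    (hij : i ≠ j)
    (x : ℤ) (hx : x.natAbs ≤ orderOf (pE cs i j)) (hx0 : x ≠ 0) {c : B} (hc : c = i ∨ c = j)
    (hnready : ¬ readyDown cs i j x c) :
    uVee cs c (EE cs i j x * u) = EE cs i j x * u ∧
      ∀ c', (c' = i ∨ c' = j) → c' ≠ c → readyDown cs i j x c' := by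
  set n := orderOf (pE cs i j) with hn
  rw [readyDown, not_and_or, not_or, not_or] at hnready
  rcases hnready with h | ⟨h1, h2, h3⟩
  · exact absurd hx0 (by simpa using h)
  have hlx : cs.length (EE cs i j x * u) = x.natAbs + cs.length u :=
    length_EE_mul cs i j u hmin x (by omega)
  have hxn : x.natAbs < n := by
    rcases lt_or_eq_of_le hx with h | h
    · exact h
    · exact absurd h h3
  rcases lt_trichotomy x 0 with hxs | hxs | hxs
  · -- x < 0 : c = lamB (x-1), the step goes away from 0, stall
    have hcl : c = lamB i j (x-1) := by
      rcases lamB_mem i j hc x with h | h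
      · exact absurd ⟨hxs, h⟩ h2
      · exact h
    have hstep : cs.simple c * (EE cs i j x * u) = EE cs i j (x-1) * u := by
      rw [← mul_assoc, hcl, EE_step']
    have hly : cs.length (EE cs i j (x-1) * u) = (x-1).natAbs + cs.length u :=
      length_EE_mul cs i j u hmin (x-1) (by omega)
    constructor
    · rw [uVee, if_neg]
      rw [hstep, hlx, hly]
      omega
    · intro c' hc' hne
      have hc'l : c' = lamB i j x := by
        rcases lamB_mem i j hc' x with h | h
        · exact h
        · exact absurd (h.trans hcl.symm) hne
      exact ⟨hx0, Or.inr (Or.inl ⟨hxs, hc'l⟩)⟩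
  · exact absurd hxs hx0
  · have hcl : c = lamB i j x := by
      rcases lamB_mem i j hc x with h | h
      · exact h
      · exact absurd ⟨hxs, h⟩ h1
    have hstep : cs.simple c * (EE cs i j x * u) = EE cs i j (x+1) * u := by
      rw [← mul_assoc, hcl, EE_step]
    have hly : cs.length (EE cs i j (x+1) * u) = (x+1).natAbs + cs.length u :=
      length_EE_mul cs i j u hmin (x+1) (by omega)
    constructor
    · rw [uVee, if_neg]
      rw [hstep, hlx, hly]
      omega
    · intro c' hc' hne
      have hc'l : c' = lamB i j (x-1) := by
        rcases lamB_mem i j hc' x with h | h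
        · exact absurd (h.trans hcl.symm) hne
        · exact h
      exact ⟨hx0, Or.inl ⟨hxs, hc'l⟩⟩

lemma trajUp (hmin : ∀ x : ℤ, cs.length u ≤ cs.length (EE cs i j x * u))
    (hij : i ≠ j) (hn2 : 2 ≤ orderOf (pE cs i j)) :
    ∀ (m : ℕ) (a b : B), a ≠ b → (a = i ∨ a = j) → (b = i ∨ b = j) →
    ∀ x : ℤ, x.natAbs ≤ orderOf (pE cs i j) →
    ∃ y : ℤ, y.natAbs ≤ orderOf (pE cs i j) ∧
      altApply (uWedge cs a) (uWedge cs b) m (EE cs i j x * u) = EE cs i j y * u ∧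
      min (orderOf (pE cs i j)) (m + x.natAbs - min 1 x.natAbs) ≤ y.natAbs ∧
      (1 ≤ m → (y.natAbs = orderOf (pE cs i j) ∨ readyUp i j y b)) := by
  intro m
  induction m with
  | zero =>
    intro a b hab ha hb x hx
    exact ⟨x, hx, rfl, by omega, fun h => absurd h (by omega)⟩
  | succ m ih =>
    intro a b hab ha hb x hx
    have hrw : altApply (uWedge cs a) (uWedge cs b) (m+1) (EE cs i j x * u) =
        uWedge cs a (altApply (uWedge cs b) (uWedge cs a) m (EE cs i j x * u)) := rfl
    by_cases hm : m = 0
    · subst hm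
      have hrw0 : altApply (uWedge cs b) (uWedge cs a) 0 (EE cs i j x * u) =
          EE cs i j x * u := rfl
      by_cases hxtop : x.natAbs = orderOf (pE cs i j)
      · refine ⟨x, hx, ?_, by omega, fun _ => Or.inl hxtop⟩
        rw [hrw, hrw0, upFix cs i j u hmin hn2 x hxtop ha]
      · by_cases hready : readyUp i j x a
        · obtain ⟨y, hyeq, hy1, hy2, hy3⟩ := upMove cs i j u hmin hij x (by omega) ha hready
          refine ⟨y, hy2, ?_, by omega, fun _ => Or.inr (hy3 b hb (Ne.symm hab))⟩
          rw [hrw, hrw0, hyeq]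
        · have hx0 : x ≠ 0 := fun h => hready (h ▸ readyUp_zero i j ha)
          have hx0' : 1 ≤ x.natAbs := by omega
          obtain ⟨hstall, hready'⟩ := upStall cs i j u hmin hij x hx ha hready
          refine ⟨x, hx, ?_, by omega, fun _ => Or.inr (hready' b hb (Ne.symm hab))⟩
          rw [hrw, hrw0, hstall]
    · have hm1 : 1 ≤ m := by omega
      obtain ⟨y₁, hy₁n, heq₁, hbound₁, hguard₁⟩ := ih b a (Ne.symm hab) hb ha x hx
      rcases hguard₁ hm1 with htop | hready
      · refine ⟨y₁, hy₁n, ?_, by omega, fun _ => Or.inl htop⟩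
        rw [hrw, heq₁, upFix cs i j u hmin hn2 y₁ htop ha]
      · by_cases hytop : y₁.natAbs = orderOf (pE cs i j)
        · refine ⟨y₁, hy₁n, ?_, by omega, fun _ => Or.inl hytop⟩
          rw [hrw, heq₁, upFix cs i j u hmin hn2 y₁ hytop ha]
        · obtain ⟨y, hyeq, hy1, hy2, hy3⟩ := upMove cs i j u hmin hij y₁ (by omega) ha hready
          refine ⟨y, hy2, ?_, by omega, fun _ => Or.inr (hy3 b hb (Ne.symm hab))⟩
          rw [hrw, heq₁, hyeq]

lemma trajDown (hmin : ∀ x : ℤ, cs.length u ≤ cs.length (EE cs i j x * u))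
    (hij : i ≠ j) (hn2 : 2 ≤ orderOf (pE cs i j)) :
    ∀ (m : ℕ) (a b : B), a ≠ b → (a = i ∨ a = j) → (b = i ∨ b = j) →
    ∀ x : ℤ, x.natAbs ≤ orderOf (pE cs i j) →
    ∃ y : ℤ, y.natAbs ≤ orderOf (pE cs i j) ∧
      altApply (uVee cs a) (uVee cs b) m (EE cs i j x * u) = EE cs i j y * u ∧
      y.natAbs ≤ min (orderOf (pE cs i j)) (x.natAbs + 1) - m ∧
      (1 ≤ m → (y = 0 ∨ readyDown cs i j y b)) := by
  intro m
  induction m with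
  | zero =>
    intro a b hab ha hb x hx
    exact ⟨x, hx, rfl, by omega, fun h => absurd h (by omega)⟩
  | succ m ih =>
    intro a b hab ha hb x hx
    have hrw : altApply (uVee cs a) (uVee cs b) (m+1) (EE cs i j x * u) =
        uVee cs a (altApply (uVee cs b) (uVee cs a) m (EE cs i j x * u)) := rfl
    by_cases hm : m = 0
    · subst hm
      have hrw0 : altApply (uVee cs b) (uVee cs a) 0 (EE cs i j x * u) =
          EE cs i j x * u := rfl
      by_cases hx0 : x = 0
      · subst hx0
        refine ⟨0, by omega, ?_, by omega, fun _ => Or.inl rfl⟩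
        rw [hrw, hrw0, downFixZero cs i j u hmin hn2 ha]
      · by_cases hready : readyDown cs i j x a
        · obtain ⟨y, hyeq, hy1, hy2, hy3⟩ := downMove cs i j u hmin hij hn2 x hx ha hready
          refine ⟨y, hy2, ?_, by omega, fun _ => hy3 b hb (Ne.symm hab)⟩
          rw [hrw, hrw0, hyeq]
        · have hxtop : x.natAbs ≠ orderOf (pE cs i j) := by
            intro h
            exact hready ⟨hx0, Or.inr (Or.inr h)⟩
          obtain ⟨hstall, hready'⟩ := downStall cs i j u hmin hij x hx hx0 ha hready
          refine ⟨x, hx, ?_, by omega, fun _ => Or.inr (hready' b hb (Ne.symm hab))⟩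
          rw [hrw, hrw0, hstall]
    · have hm1 : 1 ≤ m := by omega
      obtain ⟨y₁, hy₁n, heq₁, hbound₁, hguard₁⟩ := ih b a (Ne.symm hab) hb ha x hx
      rcases hguard₁ hm1 with hzero | hready
      · subst hzero
        refine ⟨0, by omega, ?_, by omega, fun _ => Or.inl rfl⟩
        rw [hrw, heq₁, downFixZero cs i j u hmin hn2 ha]
      · have hy₁0 : y₁ ≠ 0 := hready.1
        obtain ⟨y, hyeq, hy1, hy2, hy3⟩ := downMove cs i j u hmin hij hn2 y₁ hy₁n ha hready
        refine ⟨y, hy2, ?_, by omega, fun _ => hy3 b hb (Ne.symm hab)⟩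
        rw [hrw, heq₁, hyeq]

end Dyn

end Dihedral

lemma EE_zero : EE cs i j 0 = 1 := by
  rw [EE, if_pos (by decide : Even (0:ℤ))]
  norm_num


/-- The maps `u_i^∧` and `u_i^∨` satisfy the braid relations: if `s_i s_j` has finite
order `n`, then `u_i u_j u_i ⋯ = u_j u_i u_j ⋯` with `n` factors on each side. -/
theorem stmt0 (i j : B) (hfin : IsOfFinOrder (cs.simple i * cs.simple j)) :
    altApply (uWedge cs i) (uWedge cs j) (orderOf (cs.simple i * cs.simple j)) =
      altApply (uWedge cs j) (uWedge cs i) (orderOf (cs.simple i * cs.simple j)) ∧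
    altApply (uVee cs i) (uVee cs j) (orderOf (cs.simple i * cs.simple j)) =
      altApply (uVee cs j) (uVee cs i) (orderOf (cs.simple i * cs.simple j)) := by
  have hnpE : orderOf (pE cs i j) = orderOf (cs.simple i * cs.simple j) := rfl
  have hn0 : 0 < orderOf (cs.simple i * cs.simple j) := hfin.orderOf_pos
  by_cases hn1 : orderOf (cs.simple i * cs.simple j) = 1
  · have hp1 : cs.simple i * cs.simple j = 1 := orderOf_eq_one_iff.mp hn1
    have hss : cs.simple i = cs.simple j := by
      calc cs.simple i = cs.simple i * cs.simple j * cs.simple j := by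
            rw [cs.simple_mul_simple_cancel_right]
      _ = 1 * cs.simple j := by rw [hp1]
      _ = cs.simple j := one_mul _
    have hW : uWedge cs i = uWedge cs j := by
      funext v; rw [uWedge, uWedge, hss]
    have hV : uVee cs i = uVee cs j := by
      funext v; rw [uVee, uVee, hss]
    rw [hW, hV]
    exact ⟨rfl, rfl⟩
  · have hn2 : 2 ≤ orderOf (pE cs i j) := by omega
    have hij : i ≠ j := by
      intro h
      have h1 : pE cs i j = 1 := by rw [pE, h, cs.simple_mul_simple_self]
      rw [h1, orderOf_one] at hn2
      omega
    -- setup for a given v : common data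
    have main : ∀ v : W, ∃ (u : W) (x₁ : ℤ),
        (∀ x : ℤ, cs.length u ≤ cs.length (EE cs i j x * u)) ∧
        x₁.natAbs ≤ orderOf (pE cs i j) ∧ v = EE cs i j x₁ * u := by
      intro v
      obtain ⟨x₀, hx₀min⟩ : ∃ x₀ : ℤ, ∀ x : ℤ,
          cs.length (EE cs i j x₀ * v) ≤ cs.length (EE cs i j x * v) := by
        have hne : (Set.range (fun x : ℤ => cs.length (EE cs i j x * v))).Nonempty :=
          ⟨_, ⟨0, rfl⟩⟩
        obtain ⟨x₀, hx₀⟩ := Nat.sInf_mem hne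
        exact ⟨x₀, fun x => le_of_eq_of_le hx₀ (Nat.sInf_le ⟨x, rfl⟩)⟩
      set y₀ : ℤ := if Even x₀ then -x₀ else x₀ with hy₀
      set N : ℤ := (orderOf (pE cs i j) : ℤ) with hN
      have hNpos : 0 < N := by
        rw [hN]
        exact_mod_cast (by omega : 0 < orderOf (pE cs i j))
      have hdm := Int.mul_ediv_add_emod (y₀ + N) (2*N)
      have hmod1 : 0 ≤ (y₀ + N) % (2*N) := Int.emod_nonneg _ (by omega)
      have hmod2 : (y₀ + N) % (2*N) < 2*N := Int.emod_lt_of_pos _ (by omega)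
      refine ⟨EE cs i j x₀ * v, (y₀ + N) % (2*N) - N, ?_, by omega, ?_⟩
      · intro x
        rw [← mul_assoc, EE_mul]
        exact hx₀min _
      · have hcongr : EE cs i j ((y₀ + N) % (2*N) - N) = EE cs i j y₀ := by
          apply EE_congr
          refine ⟨-((y₀ + N) / (2*N)), ?_⟩
          rw [← hN, mul_neg]
          omega
        rw [hcongr, hy₀]
        by_cases hx : Even x₀
        · rw [if_pos hx, ← mul_assoc, EE_mul, if_pos hx,
            show -x₀ + x₀ = 0 from by ring, EE_zero, one_mul]
        · rw [if_neg hx, ← mul_assoc, EE_mul, if_neg hx, sub_self, EE_zero, one_mul]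
    constructor
    · funext v
      obtain ⟨u, x₁, hmin, hx₁, hv⟩ := main v
      obtain ⟨y, hyn, heq, hbound, _⟩ := trajUp cs i j u hmin hij hn2
        (orderOf (pE cs i j)) i j hij (Or.inl rfl) (Or.inr rfl) x₁ hx₁
      obtain ⟨y', hyn', heq', hbound', _⟩ := trajUp cs i j u hmin hij hn2
        (orderOf (pE cs i j)) j i hij.symm (Or.inr rfl) (Or.inl rfl) x₁ hx₁
      have hytop : y.natAbs = orderOf (pE cs i j) := by omega
      have hytop' : y'.natAbs = orderOf (pE cs i j) := by omega
      have hyy : EE cs i j y = EE cs i j y' := by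
        have h1 : EE cs i j y = EE cs i j ((orderOf (pE cs i j) : ℤ)) := by
          rcases Int.natAbs_eq y with h | h
          · rw [h, hytop]
          · apply EE_congr
            exact ⟨-1, by omega⟩
        have h2 : EE cs i j y' = EE cs i j ((orderOf (pE cs i j) : ℤ)) := by
          rcases Int.natAbs_eq y' with h | h
          · rw [h, hytop']
          · apply EE_congr
            exact ⟨-1, by omega⟩
        rw [h1, h2]
      rw [← hnpE, hv, heq, heq', hyy]
    · funext v
      obtain ⟨u, x₁, hmin, hx₁, hv⟩ := main v
      obtain ⟨y, hyn, heq, hbound, _⟩ := trajDown cs i j u hmin hij hn2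
        (orderOf (pE cs i j)) i j hij (Or.inl rfl) (Or.inr rfl) x₁ hx₁
      obtain ⟨y', hyn', heq', hbound', _⟩ := trajDown cs i j u hmin hij hn2
        (orderOf (pE cs i j)) j i hij.symm (Or.inr rfl) (Or.inl rfl) x₁ hx₁
      have hy0 : y = 0 := by omega
      have hy0' : y' = 0 := by omega
      rw [← hnpE, hv, heq, heq', hy0, hy0']


end PaperBase
end

section
/- Let W be a Coxeter group. If u, u', v, v' ∈ W satisfy u ≤ u' and v ≤ v' in the strong Bruhat order, then u ∘ v ≤ u' ∘ v', where ∘ denotes the Demazure product. -/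
/-!
Along a word `ω`, the Demazure product `x ∘ ω` applies letter by letter the map
`x ↦ x ∘ s = max (x, x s)`. This map is monotone for the Bruhat order (the lifting property)
and `x ≤ x ∘ s`, so `x ∘ ω` is monotone in `x` and can only decrease when `ω` is replaced by a
subword. Since `v ≤ v'` makes `v` the product of a reduced subword of the chosen reduced word of
`v'`, it remains to see that `x ∘ ω` depends only on the product of the reduced word `ω`: it is
the Bruhat-largest `x y` with `y ≤ π ω` and `ℓ (x y) = ℓ x + ℓ y`.

The Bruhat order facts come from its description by chains `x < x t` (`t` a reflection, length
going up), through the strong exchange condition, proved with Tits' permutation representation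
of `W` on `W × ZMod 2`.
-/

open Polynomial

namespace PaperBase

variable {B : Type*} {W : Type*} [Group W] {M : CoxeterMatrix B} (cs : CoxeterSystem M W)

local prefix:100 "s " => cs.simple
local prefix:100 "π " => cs.wordProd
local prefix:100 "ℓ " => cs.length
local prefix:100 "ris " => cs.rightInvSeq

section TitsRepresentation

open scoped Classical

theorem simple_mul_mul_simple_eq_simple_iff (i : B) (t : W) :
    s i * t * s i = s i ↔ t = s i := by
  constructor
  · intro h
    simpa [mul_assoc, cs.simple_mul_simple_cancel_left] using congrArg (s i * · * s i) h
  · rintro rfl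
    rw [cs.simple_mul_simple_self, one_mul]

/-- The generator `s i` of Tits' representation: conjugation by `s i` on the first coordinate,
flipping the sign when the first coordinate is `s i` itself. The sign accumulated along a word `ω`
is then the parity of the number of occurrences of `t` in the right inversion sequence of `ω`. -/
noncomputable def titsPerm (i : B) : Equiv.Perm (W × ZMod 2) :=
  Function.Involutive.toPerm (fun p => (s i * p.1 * s i, p.2 + if p.1 = s i then 1 else 0)) <| by
    rintro ⟨t, e⟩
    simp only [simple_mul_mul_simple_eq_simple_iff, Prod.mk.injEq]
    refine ⟨by simp [mul_assoc, cs.simple_mul_simple_cancel_left], ?_⟩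
    by_cases h : t = s i <;> simp [h, add_assoc, CharTwo.add_self_eq_zero]

theorem titsPerm_apply (i : B) (t : W) (e : ZMod 2) :
    titsPerm cs i (t, e) = (s i * t * s i, e + if t = s i then 1 else 0) :=
  rfl

theorem conj_eq_iff_eq_conj (a b c x : W) : a * x * b = c ↔ x = a⁻¹ * c * b⁻¹ := by
  rw [eq_mul_inv_iff_mul_eq, eq_inv_mul_iff_mul_eq, ← mul_assoc]

theorem simple_mul_simple_pow_inv (i i' : B) (k : ℕ) :
    ((s i * s i') ^ k)⁻¹ = (s i' * s i) ^ k := by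
  rw [← inv_pow, mul_inv_rev, cs.inv_simple, cs.inv_simple]

theorem simple_mul_simple_mul_simple_pow (i i' : B) (k : ℕ) :
    s i' * (s i * s i') ^ k = (s i' * s i) ^ k * s i' := by
  induction k with
  | zero => simp
  | succ k ih => rw [pow_succ, ← mul_assoc, ih, pow_succ]; group

theorem titsPerm_mul_pow_apply (i i' : B) (k : ℕ) (t : W) (e : ZMod 2) :
    ((titsPerm cs i * titsPerm cs i') ^ k) (t, e) =
      ((s i * s i') ^ k * t * (s i' * s i) ^ k,
        e + ∑ l ∈ Finset.range (2 * k), if t = (s i' * s i) ^ l * s i' then 1 else 0) := by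
  induction k with
  | zero => simp
  | succ k ih =>
    have hswap := simple_mul_simple_mul_simple_pow cs i i' k
    have heven : (s i * s i') ^ k * t * (s i' * s i) ^ k = s i' ↔
        t = (s i' * s i) ^ (2 * k) * s i' := by
      rw [conj_eq_iff_eq_conj, simple_mul_simple_pow_inv, simple_mul_simple_pow_inv, mul_assoc,
        hswap, ← mul_assoc, ← pow_add, two_mul]
    have hodd : s i' * ((s i * s i') ^ k * t * (s i' * s i) ^ k) * s i' = s i ↔
        t = (s i' * s i) ^ (2 * k + 1) * s i' := by
      rw [← mul_assoc, ← mul_assoc, mul_assoc _ _ (s i'), conj_eq_iff_eq_conj, mul_inv_rev,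
        mul_inv_rev, simple_mul_simple_pow_inv, simple_mul_simple_pow_inv, cs.inv_simple, hswap,
        show (s i' * s i) ^ k * s i' * s i * ((s i' * s i) ^ k * s i')
          = (s i' * s i) ^ (2 * k + 1) * s i' by
            rw [show 2 * k + 1 = k + 1 + k by ring, pow_add, pow_succ]; group]
    rw [pow_succ', Equiv.Perm.mul_apply, Equiv.Perm.mul_apply, ih, titsPerm_apply,
      titsPerm_apply, if_congr heven rfl rfl, if_congr hodd rfl rfl, Prod.mk.injEq]
    refine ⟨by rw [pow_succ' (s i * s i'), pow_succ (s i' * s i)]; group, ?_⟩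
    rw [show 2 * (k + 1) = 2 * k + 1 + 1 by ring, Finset.sum_range_succ, Finset.sum_range_succ]
    ring

/-- Since `(s i' * s i) ^ M i i' = 1`, the reflections `(s i' * s i) ^ l * s i'` with
`l < 2 M i i'` come in equal pairs `l`, `l + M i i'`, so the signs cancel. -/
theorem isLiftable_titsPerm : M.IsLiftable (titsPerm cs) := by
  intro i i'
  ext ⟨t, e⟩
  · rw [titsPerm_mul_pow_apply, cs.simple_mul_simple_pow, cs.simple_mul_simple_pow']
    simp
  · have hperiod : ∀ l : ℕ, (s i' * s i) ^ (M i i' + l) = (s i' * s i) ^ l := by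
      intro l
      rw [pow_add, cs.simple_mul_simple_pow', one_mul]
    rw [titsPerm_mul_pow_apply, Equiv.Perm.one_apply, two_mul, Finset.sum_range_add]
    simp only [hperiod, CharTwo.add_self_eq_zero, add_zero]

noncomputable def titsRep : W →* Equiv.Perm (W × ZMod 2) :=
  cs.lift ⟨titsPerm cs, isLiftable_titsPerm cs⟩

theorem titsRep_simple (i : B) : titsRep cs (s i) = titsPerm cs i :=
  cs.lift_apply_simple (isLiftable_titsPerm cs) i

noncomputable def titsSign (w t : W) : ZMod 2 := (titsRep cs w (t, 0)).2

theorem titsRep_apply (w t : W) (e : ZMod 2) :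
    titsRep cs w (t, e) = (w * t * w⁻¹, e + titsSign cs w t) := by
  induction w using cs.simple_induction_right generalizing t e with
  | one =>
    simp only [titsSign, map_one, Equiv.Perm.one_apply, one_mul, mul_one, inv_one, add_zero]
  | mul_simple_right w i ih =>
    rw [titsSign, map_mul, Equiv.Perm.mul_apply, Equiv.Perm.mul_apply, titsRep_simple,
      titsPerm_apply, titsPerm_apply, ih, ih, Prod.mk.injEq, mul_inv_rev, cs.inv_simple]
    exact ⟨by group, by ring⟩

theorem titsSign_mul (a b t : W) :
    titsSign cs (a * b) t = titsSign cs b t + titsSign cs a (b * t * b⁻¹) := by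
  rw [titsSign, map_mul, Equiv.Perm.mul_apply, titsRep_apply, titsRep_apply, zero_add]

theorem titsSign_one (t : W) : titsSign cs 1 t = 0 := by
  simp [titsSign]

theorem titsSign_simple (i : B) (t : W) : titsSign cs (s i) t = if t = s i then 1 else 0 := by
  rw [titsSign, titsRep_simple, titsPerm_apply, zero_add]

theorem titsSign_self_of_isReflection {t : W} (ht : cs.IsReflection t) :
    titsSign cs t t = 1 := by
  obtain ⟨u, i, rfl⟩ := ht
  have hcancel := titsSign_mul cs u u⁻¹ (u * s i * u⁻¹)
  have hexpand := titsSign_mul cs (u * s i) u⁻¹ (u * s i * u⁻¹)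
  have hsimple := titsSign_mul cs u (s i) (s i)
  have hconj : ∀ x : W, u⁻¹ * (u * x * u⁻¹) * u = x := fun x => by group
  simp only [mul_inv_cancel, titsSign_one, inv_inv, titsSign_simple, if_true, cs.inv_simple,
    cs.simple_mul_simple_cancel_right, hconj] at hcancel hexpand hsimple
  rw [hexpand, hsimple]
  linear_combination -hcancel

theorem mem_rightInvSeq_of_titsSign_ne_zero (ω : List B) {t : W}
    (h : titsSign cs (π ω) t ≠ 0) : t ∈ ris ω := by
  induction ω with
  | nil => exact absurd (titsSign_one cs t) h
  | cons i ω ih =>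
    rw [cs.wordProd_cons, titsSign_mul, titsSign_simple] at h
    by_cases hhead : t = (π ω)⁻¹ * s i * π ω
    · exact hhead ▸ List.mem_cons_self
    · rw [if_neg (by rwa [conj_eq_iff_eq_conj, inv_inv]), add_zero] at h
      exact List.mem_cons_of_mem _ (ih h)

theorem titsSign_eq_zero_of_lt_length_mul {w t : W} (h : ℓ w < ℓ (w * t)) :
    titsSign cs w t = 0 := by
  obtain ⟨ω, hω, rfl⟩ := cs.exists_isReduced w
  by_contra hne
  have hinv :=
    cs.isRightInversion_of_mem_rightInvSeq hω (mem_rightInvSeq_of_titsSign_ne_zero cs ω hne)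
  exact absurd hinv.2 (by omega)

theorem titsSign_eq_one_of_length_mul_lt {w t : W} (ht : cs.IsReflection t)
    (h : ℓ (w * t) < ℓ w) : titsSign cs w t = 1 := by
  have hw : w * t * t = w := by rw [mul_assoc, ht.mul_self, mul_one]
  have hup : titsSign cs (w * t) t = 0 := titsSign_eq_zero_of_lt_length_mul cs (by rwa [hw])
  rw [← hw, titsSign_mul, titsSign_self_of_isReflection cs ht, ht.mul_self, one_mul, ht.inv, hup,
    add_zero]

end TitsRepresentation

theorem exists_wordProd_mul_eq_wordProd_eraseIdx {ω : List B} {t : W} (ht : cs.IsReflection t)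
    (h : ℓ (π ω * t) < ℓ (π ω)) : ∃ j < ω.length, π ω * t = π (ω.eraseIdx j) := by
  have hmem : t ∈ ris ω := mem_rightInvSeq_of_titsSign_ne_zero cs ω <| by
    rw [titsSign_eq_one_of_length_mul_lt cs ht h]
    exact one_ne_zero
  obtain ⟨j, hj, rfl⟩ := List.getElem_of_mem hmem
  refine ⟨j, by simpa using hj, ?_⟩
  rw [← cs.wordProd_mul_getD_rightInvSeq, List.getD_eq_getElem _ _ hj]

theorem isReduced_append_singleton_iff (ω : List B) (i : B) :
    cs.IsReduced (ω ++ [i]) ↔ cs.IsReduced ω ∧ ℓ (π ω) < ℓ (π ω * s i) := by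
  have hlen : ℓ (π ω) ≤ ω.length := cs.length_wordProd_le ω
  simp only [CoxeterSystem.IsReduced, cs.wordProd_append, cs.wordProd_singleton,
    List.length_append, List.length_singleton]
  rcases cs.length_mul_simple (π ω) i with h | h <;> omega

theorem exists_sublist_isReduced_wordProd_eq (δ : List B) :
    ∃ σ, σ.Sublist δ ∧ cs.IsReduced σ ∧ π σ = π δ := by
  induction δ using List.reverseRecOn with
  | nil => exact ⟨[], List.Sublist.slnil, by simp [CoxeterSystem.IsReduced], rfl⟩
  | append_singleton δ i ih =>
    obtain ⟨σ, hσδ, hσ, hσπ⟩ := ih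
    have hπ : π (δ ++ [i]) = π σ * s i := by
      rw [cs.wordProd_append, hσπ, cs.wordProd_singleton]
    by_cases hup : ℓ (π σ) < ℓ (π σ * s i)
    · refine ⟨σ ++ [i], hσδ.append (List.Sublist.refl _),
        (isReduced_append_singleton_iff cs σ i).2 ⟨hσ, hup⟩, ?_⟩
      rw [hπ, cs.wordProd_append, cs.wordProd_singleton]
    · have hdown : ℓ (π σ * s i) < ℓ (π σ) := by
        have := cs.length_mul_simple_ne (π σ) i
        omega
      obtain ⟨j, hj, hσj⟩ :=
        exists_wordProd_mul_eq_wordProd_eraseIdx cs (cs.isReflection_simple i) hdown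
      refine ⟨σ.eraseIdx j, ((List.eraseIdx_sublist σ j).trans hσδ).trans
        (List.sublist_append_left δ [i]), ?_, by rw [hπ, hσj]⟩
      have hshort : (σ.eraseIdx j).length + 1 = σ.length := List.length_eraseIdx_add_one hj
      have hle := cs.length_wordProd_le (σ.eraseIdx j)
      have hred : ℓ (π σ) = σ.length := hσ
      have hstep := cs.length_mul_simple (π σ) i
      rw [hσj] at hstep hdown
      change ℓ (π (σ.eraseIdx j)) = _
      omega

def BruhatStep (x y : W) : Prop := ∃ t, cs.IsReflection t ∧ y = x * t ∧ ℓ x < ℓ y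

/-- The Bruhat order in its textbook form, by chains of reflections (Björner–Brenti, §2.1). -/
def BruhatChain : W → W → Prop := Relation.ReflTransGen (BruhatStep cs)

noncomputable def demSimple (x : W) (i : B) : W := if ℓ x < ℓ (x * s i) then x * s i else x

theorem bruhatStep_mul_simple_of_lt_length {x : W} {i : B} (h : ℓ x < ℓ (x * s i)) :
    BruhatStep cs x (x * s i) :=
  ⟨s i, cs.isReflection_simple i, rfl, h⟩

theorem bruhatStep_of_length_mul_simple_lt {x : W} {i : B} (h : ℓ (x * s i) < ℓ x) :
    BruhatStep cs (x * s i) x :=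
  ⟨s i, cs.isReflection_simple i, (cs.simple_mul_simple_cancel_right i).symm, h⟩

theorem bruhatChain_demSimple (x : W) (i : B) : BruhatChain cs x (demSimple cs x i) := by
  unfold demSimple
  split_ifs with h
  · exact .single (bruhatStep_mul_simple_of_lt_length cs h)
  · exact .refl

theorem demSimple_wordProd_of_isReduced {ω : List B} {i : B} (h : cs.IsReduced (ω ++ [i])) :
    demSimple cs (π ω) i = π (ω ++ [i]) := by
  rw [demSimple, if_pos ((isReduced_append_singleton_iff cs ω i).1 h).2, cs.wordProd_append,
    cs.wordProd_singleton]

/-- The subword property and the lifting property are proved by a joint induction on length: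
this is the step from lifting below length `n` to subwords of reduced words of length `≤ n`. -/
theorem bruhatChain_of_sublist_of_lifting {n : ℕ}
    (hlift : ∀ y : W, ℓ y < n → ∀ x, BruhatChain cs x y → ∀ i,
      BruhatChain cs (demSimple cs x i) (demSimple cs y i))
    {ω σ : List B} (hω : cs.IsReduced ω) (hn : ω.length ≤ n) (hσω : σ.Sublist ω)
    (hσ : cs.IsReduced σ) : BruhatChain cs (π σ) (π ω) := by
  induction ω using List.reverseRecOn generalizing σ with
  | nil => rw [List.sublist_nil.mp hσω]; exact .refl
  | append_singleton ω i ih =>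
    obtain ⟨hω₁, hup⟩ := (isReduced_append_singleton_iff cs ω i).1 hω
    have hn₁ : ω.length < n := by simp at hn; omega
    obtain ⟨σ₁, τ, rfl, hσ₁ω, hτ⟩ := List.sublist_append_iff.mp hσω
    rcases List.sublist_singleton.mp hτ with rfl | rfl
    · rw [List.append_nil] at hσ ⊢
      refine (ih hω₁ hn₁.le hσ₁ω hσ).tail ?_
      rw [cs.wordProd_append, cs.wordProd_singleton]
      exact bruhatStep_mul_simple_of_lt_length cs hup
    · have hσ₁ := ((isReduced_append_singleton_iff cs σ₁ i).1 hσ).1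
      have hlifted := hlift (π ω) (by rw [hω₁]; exact hn₁) (π σ₁) (ih hω₁ hn₁.le hσ₁ω hσ₁) i
      rwa [demSimple_wordProd_of_isReduced cs hσ, demSimple_wordProd_of_isReduced cs hω] at hlifted

theorem bruhatChain_mul_simple_of_bruhatStep {y₀ y : W} {i : B}
    (hsub : ∀ {ω σ : List B}, cs.IsReduced ω → ω.length < ℓ y → σ.Sublist ω → cs.IsReduced σ →
      BruhatChain cs (π σ) (π ω))
    (hstep : BruhatStep cs y₀ y) (hdown : ℓ (y * s i) < ℓ y) : BruhatChain cs (y₀ * s i) y := by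
  obtain ⟨t, ht, rfl, hlt⟩ := hstep
  obtain ⟨κ, hκ, hκπ⟩ := cs.exists_isReduced (y₀ * t * s i)
  have hπ : π (κ ++ [i]) = y₀ * t := by
    rw [cs.wordProd_append, cs.wordProd_singleton, ← hκπ, cs.simple_mul_simple_cancel_right]
  have hκi : cs.IsReduced (κ ++ [i]) := by
    refine (isReduced_append_singleton_iff cs κ i).2 ⟨hκ, ?_⟩
    rwa [← hκπ, cs.simple_mul_simple_cancel_right]
  have hexch : ℓ (π (κ ++ [i]) * t) < ℓ (π (κ ++ [i])) := by
    rwa [hπ, mul_assoc, ht.mul_self, mul_one]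
  obtain ⟨j, hj, hy₀⟩ := exists_wordProd_mul_eq_wordProd_eraseIdx cs ht hexch
  rw [hπ, mul_assoc, ht.mul_self, mul_one] at hy₀
  rcases lt_or_ge j κ.length with hjκ | hjκ
  · rw [List.eraseIdx_append_of_lt_length hjκ, cs.wordProd_append, cs.wordProd_singleton] at hy₀
    have hy₀s : y₀ * s i = π (κ.eraseIdx j) := by rw [hy₀, cs.simple_mul_simple_cancel_right]
    obtain ⟨σ, hσκ, hσ, hσπ⟩ := exists_sublist_isReduced_wordProd_eq cs (κ.eraseIdx j)
    have hκlen : κ.length < ℓ (y₀ * t) := by rw [← hκ, ← hκπ]; exact hdown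
    have hchain := hsub hκ hκlen (hσκ.trans (List.eraseIdx_sublist κ j)) hσ
    rw [hσπ, ← hκπ] at hchain
    rw [hy₀s]
    exact hchain.tail (bruhatStep_of_length_mul_simple_lt cs hdown)
  · have hjκ : j = κ.length := by simp at hj; omega
    rw [hjκ, List.eraseIdx_append_of_length_le le_rfl, Nat.sub_self, List.eraseIdx_cons_zero,
      List.append_nil, ← hκπ] at hy₀
    have hy₀s : y₀ * s i = y₀ * t := by
      nth_rewrite 1 [hy₀]
      exact cs.simple_mul_simple_cancel_right i
    rw [hy₀s]
    exact .refl

theorem bruhatChain_demSimple_of_bruhatStep {y₀ y : W}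
    (hsub : ∀ {ω σ : List B}, cs.IsReduced ω → ω.length < ℓ y → σ.Sublist ω → cs.IsReduced σ →
      BruhatChain cs (π σ) (π ω))
    (hstep : BruhatStep cs y₀ y) (i : B) :
    BruhatChain cs (demSimple cs y₀ i) (demSimple cs y i) := by
  have hchain : BruhatChain cs y₀ y := .single hstep
  unfold demSimple
  split_ifs with h₀ h₁ h₁
  · obtain ⟨t, ht, rfl, hlt⟩ := hstep
    refine .single ⟨s i * t * s i, by simpa [cs.inv_simple] using ht.conj (s i),
      by simp only [← mul_assoc, cs.simple_mul_simple_cancel_right], ?_⟩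
    have := cs.length_mul_simple y₀ i
    omega
  · have hdown : ℓ (y * s i) < ℓ y := by
      have := cs.length_mul_simple_ne y i
      omega
    exact bruhatChain_mul_simple_of_bruhatStep cs hsub hstep hdown
  · exact hchain.tail (bruhatStep_mul_simple_of_lt_length cs h₁)
  · exact hchain

theorem bruhatChain_demSimple_demSimple {x y : W} (h : BruhatChain cs x y) (i : B) :
    BruhatChain cs (demSimple cs x i) (demSimple cs y i) := by
  induction hn : ℓ y using Nat.strong_induction_on generalizing x y i with
  | _ n ih =>
  rcases Relation.ReflTransGen.cases_tail h with rfl | ⟨y₀, hxy₀, hstep⟩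
  · exact .refl
  · have hy₀ : ℓ y₀ < n := hn ▸ hstep.choose_spec.2.2
    refine (ih _ hy₀ hxy₀ i rfl).trans (bruhatChain_demSimple_of_bruhatStep cs ?_ hstep i)
    intro ω σ hω hlt hσω hσ
    exact bruhatChain_of_sublist_of_lifting cs
      (fun _ hy' _ h' i' => ih _ (by omega) h' i' rfl) hω le_rfl hσω hσ

theorem bruhatChain_of_sublist {ω σ : List B} (hω : cs.IsReduced ω) (hσω : σ.Sublist ω)
    (hσ : cs.IsReduced σ) : BruhatChain cs (π σ) (π ω) :=
  bruhatChain_of_sublist_of_lifting cs (n := ω.length)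
    (fun _ _ _ h i => bruhatChain_demSimple_demSimple cs h i) hω le_rfl hσω hσ

theorem exists_sublist_of_bruhatChain {u w : W} (h : BruhatChain cs u w) {ω : List B}
    (hω : cs.IsReduced ω) (hωw : π ω = w) : ∃ σ, σ.Sublist ω ∧ cs.IsReduced σ ∧ π σ = u := by
  induction h generalizing ω with
  | refl => exact ⟨ω, List.Sublist.refl ω, hω, hωw⟩
  | @tail b _ _ hstep ih =>
    obtain ⟨t, ht, rfl, hlt⟩ := hstep
    have hπt : π ω * t = b := by rw [hωw, mul_assoc, ht.mul_self, mul_one]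
    obtain ⟨j, -, hj⟩ := exists_wordProd_mul_eq_wordProd_eraseIdx cs ht (by rwa [hπt, hωw])
    obtain ⟨σ₁, hσ₁ω, hσ₁, hσ₁π⟩ := exists_sublist_isReduced_wordProd_eq cs (ω.eraseIdx j)
    obtain ⟨σ, hσσ₁, hσ, hσπ⟩ := ih hσ₁ (by rw [hσ₁π, ← hj, hπt])
    exact ⟨σ, hσσ₁.trans (hσ₁ω.trans (List.eraseIdx_sublist ω j)), hσ, hσπ⟩

theorem bruhatLE_iff_bruhatChain (u w : W) : BruhatLE cs u w ↔ BruhatChain cs u w := by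
  constructor
  · rintro ⟨ω, hω, rfl, σ, hσω, hσ, rfl⟩
    exact bruhatChain_of_sublist cs hω hσω hσ
  · intro h
    obtain ⟨ω, hω, rfl⟩ := cs.exists_isReduced w
    obtain ⟨σ, hσω, hσ, hσπ⟩ := exists_sublist_of_bruhatChain cs h hω rfl
    exact ⟨ω, hω, rfl, σ, hσω, hσ, hσπ⟩

theorem bruhatLE_refl (w : W) : BruhatLE cs w w :=
  (bruhatLE_iff_bruhatChain cs w w).2 .refl

theorem bruhatLE_trans {x y z : W} (hxy : BruhatLE cs x y) (hyz : BruhatLE cs y z) :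
    BruhatLE cs x z := by
  rw [bruhatLE_iff_bruhatChain] at hxy hyz ⊢
  exact hxy.trans hyz

theorem bruhatLE_antisymm {x y : W} (hxy : BruhatLE cs x y) (hyx : BruhatLE cs y x) : x = y := by
  obtain ⟨ω, hω, rfl, σ, hσω, hσ, rfl⟩ := hxy
  obtain ⟨ω', hω', hω'π, σ', hσ'ω', hσ', hσ'π⟩ := hyx
  have hle : ω.length ≤ σ.length := by
    rw [← hω, ← hσ, ← hω'π, ← hσ'π, hσ', hω']
    exact hσ'ω'.length_le
  rw [hσω.eq_of_length (le_antisymm hσω.length_le hle)]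

theorem BruhatLE.exists_sublist {u w : W} (h : BruhatLE cs u w) {ω : List B}
    (hω : cs.IsReduced ω) (hωw : π ω = w) : ∃ σ, σ.Sublist ω ∧ cs.IsReduced σ ∧ π σ = u :=
  exists_sublist_of_bruhatChain cs ((bruhatLE_iff_bruhatChain cs u w).1 h) hω hωw

theorem bruhatLE_demSimple (x : W) (i : B) : BruhatLE cs x (demSimple cs x i) :=
  (bruhatLE_iff_bruhatChain cs _ _).2 (bruhatChain_demSimple cs x i)

theorem demSimple_mono {x y : W} (h : BruhatLE cs x y) (i : B) :
    BruhatLE cs (demSimple cs x i) (demSimple cs y i) := by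
  rw [bruhatLE_iff_bruhatChain] at h ⊢
  exact bruhatChain_demSimple_demSimple cs h i

theorem upRWord_nil (x : W) : upRWord cs x [] = x := rfl

theorem upRWord_cons (x : W) (i : B) (ω : List B) :
    upRWord cs x (i :: ω) = upRWord cs (demSimple cs x i) ω := rfl

theorem upRWord_mono (ω : List B) {x y : W} (h : BruhatLE cs x y) :
    BruhatLE cs (upRWord cs x ω) (upRWord cs y ω) := by
  induction ω generalizing x y with
  | nil => exact h
  | cons i ω ih => exact ih (demSimple_mono cs h i)

theorem upRWord_mono_sublist {σ ω : List B} (h : σ.Sublist ω) (x : W) :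
    BruhatLE cs (upRWord cs x σ) (upRWord cs x ω) := by
  induction h generalizing x with
  | slnil => exact bruhatLE_refl cs x
  | cons i _ ih => exact bruhatLE_trans cs (ih x) (upRWord_mono cs _ (bruhatLE_demSimple cs x i))
  | cons_cons i _ ih => exact ih _

theorem exists_sublist_upRWord_eq (x : W) (ω : List B) :
    ∃ σ, σ.Sublist ω ∧ upRWord cs x ω = x * π σ ∧ ℓ (x * π σ) = ℓ x + σ.length := by
  induction ω generalizing x with
  | nil => exact ⟨[], .slnil, by simp [upRWord_nil]⟩
  | cons i ω ih =>
    obtain ⟨σ, hσω, hσ, hσℓ⟩ := ih (demSimple cs x i)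
    rw [upRWord_cons, hσ]
    by_cases hup : ℓ x < ℓ (x * s i)
    · rw [demSimple, if_pos hup] at hσ hσℓ ⊢
      refine ⟨i :: σ, hσω.cons_cons i, by rw [cs.wordProd_cons, mul_assoc], ?_⟩
      rw [cs.wordProd_cons, ← mul_assoc, hσℓ, List.length_cons]
      have := cs.length_mul_simple x i
      omega
    · rw [demSimple, if_neg hup] at hσ hσℓ ⊢
      exact ⟨σ, hσω.cons i, rfl, hσℓ⟩

theorem le_upRWord_of_sublist (x : W) {σ ω : List B} (h : σ.Sublist ω)
    (hσ : ℓ (x * π σ) = ℓ x + σ.length) : BruhatLE cs (x * π σ) (upRWord cs x ω) := by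
  induction h generalizing x with
  | slnil => simpa [upRWord_nil] using bruhatLE_refl cs x
  | cons i _ ih =>
    exact bruhatLE_trans cs (ih x hσ) (upRWord_mono cs _ (bruhatLE_demSimple cs x i))
  | @cons_cons τ _ i _ ih =>
    rw [cs.wordProd_cons, ← mul_assoc] at hσ ⊢
    rw [List.length_cons] at hσ
    have hτ := cs.length_mul_le (x * s i) (π τ)
    have hτ' := cs.length_wordProd_le τ
    have hxs := cs.length_mul_simple x i
    have hup : ℓ x < ℓ (x * s i) := by omega
    rw [upRWord_cons, demSimple, if_pos hup]
    exact ih (x * s i) (by omega)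

theorem upRWord_le_of_isReduced {α β : List B} (hα : cs.IsReduced α) (hβ : cs.IsReduced β)
    (hπ : π α = π β) (x : W) : BruhatLE cs (upRWord cs x α) (upRWord cs x β) := by
  obtain ⟨σ, hσα, hσ, hσℓ⟩ := exists_sublist_upRWord_eq cs x α
  have hσred : cs.IsReduced σ := by
    have hmul := cs.length_mul_le x (π σ)
    have hword := cs.length_wordProd_le σ
    change ℓ (π σ) = σ.length
    omega
  obtain ⟨σ', hσ'β, hσ', hσ'π⟩ :=
    BruhatLE.exists_sublist cs ⟨α, hα, hπ, σ, hσα, hσred, rfl⟩ hβ rfl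
  have hlen : σ'.length = σ.length := by rw [← hσ', ← hσred, hσ'π]
  rw [hσ, ← hσ'π]
  exact le_upRWord_of_sublist cs x hσ'β (by rw [hσ'π, hσℓ, hlen])

theorem upRWord_eq_of_isReduced {α β : List B} (hα : cs.IsReduced α) (hβ : cs.IsReduced β)
    (hπ : π α = π β) (x : W) : upRWord cs x α = upRWord cs x β :=
  bruhatLE_antisymm cs (upRWord_le_of_isReduced cs hα hβ hπ x)
    (upRWord_le_of_isReduced cs hβ hα hπ.symm x)

/-- Monotonicity of the Demazure product: if `u ≤ u'` and `v ≤ v'` in the strong Bruhat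
order, then `u ∘ v ≤ u' ∘ v'`. -/
theorem stmt2 (u u' v v' : W) (hu : BruhatLE cs u u') (hv : BruhatLE cs v v') :
    BruhatLE cs (dem cs u v) (dem cs u' v') := by
  obtain ⟨σ, hσv', hσ, hσv⟩ := hv.exists_sublist cs (rword_isReduced cs v') (rword_wordProd cs v')
  have hdem : dem cs u v = upRWord cs u σ :=
    upRWord_eq_of_isReduced cs (rword_isReduced cs v) hσ (by rw [rword_wordProd, hσv]) u
  rw [hdem]
  exact bruhatLE_trans cs (upRWord_mono_sublist cs hσv' u) (upRWord_mono cs _ hu)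

end PaperBase
end

section
/- Let W be a finite Coxeter group. If x, u, w ∈ W and x ≥ u in the strong Bruhat order, then U_w ↓ x ≥ U_w ↓ u and x ↓ U_w ≥ u ↓ U_w. -/
open Polynomial

namespace PaperBase

variable {B : Type*} {W : Type*} [Group W] {M : CoxeterMatrix B} (cs : CoxeterSystem M W)

section BruhatAux

open CoxeterSystem List

variable [DecidableEq W]

section DihedralAux

variable {G : Type*} [Group G] {a b : G}

lemma gen_conj (ha : a * a = 1) (hb : b * b = 1) (r : ℕ) :
    ((a * b) ^ r)⁻¹ * b = b * (a * b) ^ r := by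
  have hai : a⁻¹ = a := inv_eq_of_mul_eq_one_right ha
  have hbi : b⁻¹ = b := inv_eq_of_mul_eq_one_right hb
  have h0 : b * (a * b) * b⁻¹ = (a * b)⁻¹ := by
    rw [mul_inv_rev, hai, hbi]
    simp [mul_assoc, hb]
  have h2 : (b * (a * b) * b⁻¹) ^ r = b * (a * b) ^ r * b⁻¹ := conj_pow ..
  rw [h0, inv_pow] at h2
  rw [h2, hbi]
  simp [mul_assoc, hb]

lemma gen_even (ha : a * a = 1) (hb : b * b = 1) (r : ℕ) :
    ((a * b) ^ r)⁻¹ * b * (a * b) ^ r = b * (a * b) ^ (r + r) := by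
  rw [gen_conj ha hb, mul_assoc, ← pow_add]

lemma gen_odd (ha : a * a = 1) (hb : b * b = 1) (r : ℕ) :
    (b * (a * b) ^ r)⁻¹ * a * (b * (a * b) ^ r) = b * (a * b) ^ (r + r + 1) := by
  have hai : a⁻¹ = a := inv_eq_of_mul_eq_one_right ha
  have hbi : b⁻¹ = b := inv_eq_of_mul_eq_one_right hb
  have h4 : b * a = (a * b)⁻¹ := by rw [mul_inv_rev, hai, hbi]
  have step1 : (b * (a * b) ^ r)⁻¹ * a * (b * (a * b) ^ r)
      = ((a * b) ^ r)⁻¹ * ((b * a) * (b * (a * b) ^ r)) := by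
    rw [mul_inv_rev, hbi]
    simp [mul_assoc]
  rw [step1, h4]
  have step2 : ((a * b) ^ r)⁻¹ * ((a * b)⁻¹ * (b * (a * b) ^ r))
      = ((a * b) ^ (r + 1))⁻¹ * b * (a * b) ^ r := by
    rw [pow_succ', mul_inv_rev]
    simp [mul_assoc]
  rw [step2, gen_conj ha hb, mul_assoc, ← pow_add,
    show r + 1 + r = r + r + 1 from by omega]

end DihedralAux



lemma ris_alt_getD (i i' : B) : ∀ (n : ℕ) (j : ℕ), j < n →
    (cs.rightInvSeq (alternatingWord i i' n)).getD j 1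
      = cs.simple i' * (cs.simple i * cs.simple i') ^ (n - 1 - j) := by
  intro n
  induction n with
  | zero => omega
  | succ n ih =>
    intro j hj
    rw [alternatingWord_succ']
    cases j with
    | succ j' =>
      dsimp [rightInvSeq]
      rw [List.getD_cons_succ]
      rw [ih j' (by omega)]
      congr 2
      omega
    | zero =>
      dsimp [rightInvSeq]
      rw [cs.prod_alternatingWord_eq_mul_pow]
      have ha := cs.simple_mul_simple_self i
      have hb := cs.simple_mul_simple_self i'
      rcases Nat.even_or_odd n with he | ho
      · rw [if_pos he, if_pos he, one_mul]
        obtain ⟨r, rfl⟩ := he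
        have hdiv : (r + r) / 2 = r := by omega
        rw [hdiv]
        have := gen_even ha hb r
        simpa using this
      · have hne : ¬ Even n := by simp [Nat.even_iff, Nat.odd_iff.mp ho]
        rw [if_neg hne, if_neg hne]
        obtain ⟨r, rfl⟩ := ho
        have hdiv : (2 * r + 1) / 2 = r := by omega
        rw [hdiv]
        have := gen_odd ha hb r
        have harith : r + r + 1 = 2 * r + 1 := by omega
        rw [harith] at this
        exact this


lemma ris_alt_double (i i' : B) (m : ℕ) (hm : (cs.simple i * cs.simple i') ^ m = 1) :
    cs.rightInvSeq (alternatingWord i i' (2 * m))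
      = cs.rightInvSeq (alternatingWord i i' m) ++ cs.rightInvSeq (alternatingWord i i' m) := by
  apply List.ext_getElem
  · simp [length_alternatingWord]; omega
  · intro j h1 h2
    have hlen : (cs.rightInvSeq (alternatingWord i i' m)).length = m := by
      simp [length_alternatingWord]
    have h1' : j < 2 * m := by simpa [length_alternatingWord] using h1
    rw [← List.getD_eq_getElem _ 1, ← List.getD_eq_getElem _ 1]
    rw [ris_alt_getD cs i i' (2 * m) j h1']
    rcases lt_or_ge j m with hj | hj
    · rw [List.getD_append _ _ 1 j (by omega)]
      rw [ris_alt_getD cs i i' m j hj,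
        show 2 * m - 1 - j = (m - 1 - j) + m from by omega, pow_add, hm, mul_one]
    · rw [List.getD_append_right _ _ 1 j (by omega)]
      rw [hlen, ris_alt_getD cs i i' m (j - m) (by omega),
        show 2 * m - 1 - j = m - 1 - (j - m) from by omega]



/-- The sign-flipping endomorphism associated to a simple generator. -/
def fE (i : B) : Function.End (W × ℤˣ) :=
  fun p => (cs.simple i * p.1 * cs.simple i, if p.1 = cs.simple i then -p.2 else p.2)

lemma prod_map_fE (ω : List B) :
    (ω.map (fE cs)).prod = fun p : W × ℤˣ =>
      (cs.wordProd ω * p.1 * (cs.wordProd ω)⁻¹,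
        (-1 : ℤˣ) ^ ((cs.rightInvSeq ω).count p.1) * p.2) := by
  induction ω with
  | nil =>
    funext p
    simp [Function.End.one_def, rightInvSeq]
  | cons i ω ih =>
    funext p
    rw [List.map_cons, List.prod_cons]
    have happ : (fE cs i * (ω.map (fE cs)).prod) p = fE cs i ((ω.map (fE cs)).prod p) := rfl
    rw [happ, ih]
    dsimp only [fE]
    have hcond : (cs.wordProd ω * p.1 * (cs.wordProd ω)⁻¹ = cs.simple i)
        ↔ p.1 = (cs.wordProd ω)⁻¹ * cs.simple i * cs.wordProd ω := by
      constructor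
      · intro h; rw [← h]; group
      · intro h; rw [h]; group
    have hris : cs.rightInvSeq (i :: ω)
        = ((cs.wordProd ω)⁻¹ * cs.simple i * cs.wordProd ω) :: cs.rightInvSeq ω := rfl
    rw [hris]
    apply Prod.ext
    · dsimp only
      rw [cs.wordProd_cons]
      rw [mul_inv_rev, cs.inv_simple]
      group
    · dsimp only
      rw [List.count_cons]
      by_cases hc : p.1 = (cs.wordProd ω)⁻¹ * cs.simple i * cs.wordProd ω
      · rw [if_pos (hcond.mpr hc), if_pos (by simp [hc])]
        rw [pow_succ, mul_neg_one, neg_mul]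
      · rw [if_neg (fun h => hc (hcond.mp h)),
          if_neg (by simp only [beq_iff_eq]; exact fun h => hc h.symm), add_zero]

lemma alt_map_prod {N : Type*} [Monoid N] (g : B → N) (i i' : B) (m : ℕ) :
    ((alternatingWord i i' (2 * m)).map g).prod = (g i * g i') ^ m := by
  induction m with
  | zero => simp [alternatingWord]
  | succ m ih =>
    have h2 : alternatingWord i i' (2 * (m + 1)) = i :: i' :: alternatingWord i i' (2 * m) := by
      rw [show 2 * (m + 1) = (2 * m + 1) + 1 from by ring, alternatingWord_succ',
        alternatingWord_succ']
      rw [if_neg (by simp [Nat.even_add_one, parity_simps]), if_pos (by simp [parity_simps])]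
    rw [h2, List.map_cons, List.map_cons, List.prod_cons, List.prod_cons, ih, pow_succ',
      mul_assoc]

lemma isLiftable_fE : M.IsLiftable (fE cs) := by
  intro i i'
  rw [← alt_map_prod (fE cs) i i' (M i i'), prod_map_fE]
  have hm := cs.simple_mul_simple_pow i i'
  have hπ : cs.wordProd (alternatingWord i i' (2 * M i i')) = 1 := by
    rw [cs.prod_alternatingWord_eq_mul_pow]
    rw [if_pos ⟨M i i', by ring⟩, one_mul, show 2 * M i i' / 2 = M i i' from by omega, hm]
  funext p
  have hcount : Even ((cs.rightInvSeq (alternatingWord i i' (2 * M i i'))).count p.1) := by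
    rw [ris_alt_double cs i i' (M i i') hm, List.count_append]
    exact ⟨_, rfl⟩
  rw [hπ]
  show ((1 : W) * p.1 * (1 : W)⁻¹, (-1 : ℤˣ) ^ _ * p.2) = p
  rw [hcount.neg_one_pow]
  simp

/-- The sign representation of the Coxeter group. -/
def sgn : W →* Function.End (W × ℤˣ) := cs.lift ⟨fE cs, isLiftable_fE cs⟩

lemma sgn_wordProd (ω : List B) : sgn cs (cs.wordProd ω) = (ω.map (fE cs)).prod := by
  show sgn cs (List.prod (ω.map cs.simple)) = _
  rw [MonoidHom.map_list_prod, List.map_map]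
  refine congrArg List.prod (List.map_congr_left fun j _ => ?_)
  show sgn cs (cs.simple j) = fE cs j
  exact cs.lift_apply_simple (isLiftable_fE cs) j

lemma count_ris_parity {ω ω' : List B} (h : cs.wordProd ω = cs.wordProd ω') (t : W) :
    ((-1 : ℤˣ) ^ ((cs.rightInvSeq ω).count t)) = (-1) ^ ((cs.rightInvSeq ω').count t) := by
  have h2 := congrArg (sgn cs) h
  rw [sgn_wordProd, sgn_wordProd, prod_map_fE, prod_map_fE] at h2
  have h3 := congrArg Prod.snd (congrFun h2 (t, 1))
  simpa using h3



lemma simple_cancel (i : B) (y : W) : cs.simple i * (cs.simple i * y) = y := by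
  rw [← mul_assoc, cs.simple_mul_simple_self, one_mul]

omit [DecidableEq W] in
lemma rightInvSeq_append (α β : List B) :
    cs.rightInvSeq (α ++ β)
      = (cs.rightInvSeq α).map (fun x => (cs.wordProd β)⁻¹ * x * cs.wordProd β)
        ++ cs.rightInvSeq β := by
  induction α with
  | nil => simp [rightInvSeq]
  | cons a α ih =>
    show ((cs.wordProd (α ++ β))⁻¹ * cs.simple a * cs.wordProd (α ++ β)) :: cs.rightInvSeq (α ++ β)
      = _
    rw [ih, cs.wordProd_append]
    show _ = ((cs.wordProd β)⁻¹ * ((cs.wordProd α)⁻¹ * cs.simple a * cs.wordProd α) * cs.wordProd β)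
        :: ((cs.rightInvSeq α).map _ ++ cs.rightInvSeq β)
    rw [mul_inv_rev]
    group

omit [DecidableEq W] in
lemma map_conj_leftInvSeq (d : List B) :
    (cs.leftInvSeq d).map (fun x => (cs.wordProd d)⁻¹ * x * cs.wordProd d)
      = cs.rightInvSeq d := by
  induction d with
  | nil => simp [rightInvSeq, leftInvSeq]
  | cons c d ih =>
    show (cs.simple c :: (cs.leftInvSeq d).map (MulAut.conj (cs.simple c))).map _
      = ((cs.wordProd d)⁻¹ * cs.simple c * cs.wordProd d) :: cs.rightInvSeq d
    rw [List.map_cons, List.map_map]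
    congr 1
    · rw [cs.wordProd_cons, mul_inv_rev, cs.inv_simple]
      simp [mul_assoc, simple_cancel]
    · rw [← ih]
      refine List.map_congr_left fun x _ => ?_
      show (cs.wordProd (c :: d))⁻¹ * (cs.simple c * x * (cs.simple c)⁻¹) * cs.wordProd (c :: d)
        = (cs.wordProd d)⁻¹ * x * cs.wordProd d
      rw [cs.wordProd_cons, mul_inv_rev, cs.inv_simple]
      simp [mul_assoc, simple_cancel]

lemma odd_count_ris {w t : W} (ht : cs.IsReflection t) (hl : cs.length (w * t) < cs.length w)
    {ω : List B} (hω : cs.wordProd ω = w) : Odd ((cs.rightInvSeq ω).count t) := by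
  have htt : t * t = 1 := ht.mul_self
  obtain ⟨v, j, htv⟩ := ht
  obtain ⟨d, hd⟩ := cs.wordProd_surjective v
  obtain ⟨ρ, hρlen, hρprod⟩ := cs.exists_reduced_word (w * t)
  set θ : List B := d ++ j :: d.reverse with hθ
  have hπθ : cs.wordProd θ = t := by
    rw [hθ, cs.wordProd_append, cs.wordProd_cons, cs.wordProd_reverse, hd, htv, ← mul_assoc]
  have hπρθ : cs.wordProd (ρ ++ θ) = cs.wordProd ω := by
    rw [cs.wordProd_append, hπθ, ← hρprod, hω, mul_assoc, htt, mul_one]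
  have hinj : ∀ g : W, Function.Injective (fun x : W => g⁻¹ * x * g) := by
    intro g x y h
    dsimp only at h
    exact mul_left_cancel (mul_right_cancel h)
  -- count in ris θ is odd
  have hcθ : (cs.rightInvSeq θ).count t
      = 2 * ((cs.rightInvSeq d).count (cs.simple j)) + 1 := by
    rw [hθ, rightInvSeq_append, List.count_append]
    have h1 : cs.wordProd (j :: d.reverse) = cs.simple j * v⁻¹ := by
      rw [cs.wordProd_cons, cs.wordProd_reverse, hd]
    have h2 : ((cs.rightInvSeq d).map
        (fun x => (cs.wordProd (j :: d.reverse))⁻¹ * x * cs.wordProd (j :: d.reverse))).count t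
        = (cs.rightInvSeq d).count (cs.simple j) := by
      have ht' : (fun x : W => (cs.wordProd (j :: d.reverse))⁻¹ * x * cs.wordProd (j :: d.reverse))
          (cs.simple j) = t := by
        dsimp only
        rw [h1, htv, mul_inv_rev, cs.inv_simple]
        simp [mul_assoc, simple_cancel]
      rw [← ht']
      exact List.count_map_of_injective _ _ (hinj _) _
    rw [h2]
    have h3 : cs.rightInvSeq (j :: d.reverse)
        = ((cs.wordProd d.reverse)⁻¹ * cs.simple j * cs.wordProd d.reverse)
          :: cs.rightInvSeq d.reverse := rfl
    rw [h3, List.count_cons]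
    have h4 : cs.wordProd d * cs.simple j * (cs.wordProd d)⁻¹ = t := by
      rw [hd]; exact htv.symm
    rw [if_pos (by simp [h4])]
    have h5 : (cs.rightInvSeq d.reverse).count t = (cs.rightInvSeq d).count (cs.simple j) := by
      rw [cs.rightInvSeq_reverse, List.count_reverse, ← map_conj_leftInvSeq cs d, hd]
      have hφt : (fun x : W => v⁻¹ * x * v) t = cs.simple j := by
        dsimp only
        rw [htv]
        simp [mul_assoc]
      rw [← hφt]
      exact (List.count_map_of_injective _ _ (hinj v) t).symm
    rw [h5]
    omega
  -- count in ris ρ is even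
  have hρred : cs.IsReduced ρ := by
    show cs.length (cs.wordProd ρ) = ρ.length
    exact hρlen
  have hceven : Even ((cs.rightInvSeq ρ).count t) := by
    rcases Nat.even_or_odd ((cs.rightInvSeq ρ).count t) with he | ho
    · exact he
    · exfalso
      have hmem : t ∈ cs.rightInvSeq ρ := List.count_pos_iff.mp ho.pos
      have hinv := cs.isRightInversion_of_mem_rightInvSeq hρred hmem
      have h6 : cs.length (cs.wordProd ρ * t) < cs.length (cs.wordProd ρ) := hinv.2
      rw [← hρprod, mul_assoc, htt, mul_one] at h6
      omega
  -- transfer parity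
  have hpar := count_ris_parity cs hπρθ t
  have hcnt : (cs.rightInvSeq (ρ ++ θ)).count t
      = (cs.rightInvSeq ρ).count t + (cs.rightInvSeq θ).count t := by
    rw [rightInvSeq_append, List.count_append, hπθ]
    congr 1
    have := List.count_map_of_injective (cs.rightInvSeq ρ) (fun x : W => t⁻¹ * x * t) (hinj t) t
    simpa using this
  rcases Nat.even_or_odd ((cs.rightInvSeq ω).count t) with he | ho
  · exfalso
    rw [he.neg_one_pow] at hpar
    have hodd : Odd ((cs.rightInvSeq (ρ ++ θ)).count t) := by
      rw [hcnt, hcθ]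
      rcases hceven with ⟨k, hk⟩
      exact ⟨k + (cs.rightInvSeq d).count (cs.simple j), by omega⟩
    rw [hodd.neg_one_pow] at hpar
    exact absurd (congrArg Units.val hpar) (by norm_num)
  · exact ho

lemma strong_exchange_right (ω : List B) {t : W} (ht : cs.IsReflection t)
    (hl : cs.length (cs.wordProd ω * t) < cs.length (cs.wordProd ω)) :
    ∃ j, ∃ _ : j < ω.length, cs.wordProd ω * t = cs.wordProd (ω.eraseIdx j) := by
  have hodd := odd_count_ris cs ht hl rfl
  have hmem : t ∈ cs.rightInvSeq ω := List.count_pos_iff.mp hodd.pos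
  obtain ⟨k, hk, hget⟩ := List.getElem_of_mem hmem
  have hk' : k < ω.length := by simpa using hk
  refine ⟨k, hk', ?_⟩
  have hgd : (cs.rightInvSeq ω).getD k 1 = t := by
    rw [List.getD_eq_getElem _ 1 hk, hget]
  rw [← hgd, cs.wordProd_mul_getD_rightInvSeq]



/-- Deletion property: every word has a reduced sublist with the same product. -/
lemma deletion (ω : List B) :
    ∃ ρ : List B, ρ.Sublist ω ∧ cs.IsReduced ρ ∧ cs.wordProd ρ = cs.wordProd ω := by
  induction ω using List.reverseRecOn with
  | nil => exact ⟨[], by simp, by show cs.length (cs.wordProd []) = _; simp, rfl⟩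
  | append_singleton ω₀ c ih =>
    obtain ⟨ρ₀, hsub, hred, hprod⟩ := ih
    rcases cs.length_mul_simple (cs.wordProd ρ₀) c with h | h
    · refine ⟨ρ₀ ++ [c], hsub.append (List.Sublist.refl _), ?_, ?_⟩
      · show cs.length (cs.wordProd (ρ₀ ++ [c])) = (ρ₀ ++ [c]).length
        rw [cs.wordProd_append, cs.wordProd_singleton, h, hred]
        simp
      · rw [cs.wordProd_append, cs.wordProd_append, cs.wordProd_singleton, hprod]
    · have hl : cs.length (cs.wordProd ρ₀ * cs.simple c) < cs.length (cs.wordProd ρ₀) := by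
        omega
      obtain ⟨j, hj, heq⟩ := strong_exchange_right cs ρ₀ (cs.isReflection_simple c) hl
      refine ⟨ρ₀.eraseIdx j, ?_, ?_, ?_⟩
      · exact ((ρ₀.eraseIdx_sublist j).trans hsub).trans (by simp)
      · show cs.length (cs.wordProd (ρ₀.eraseIdx j)) = (ρ₀.eraseIdx j).length
        have h7 := List.length_eraseIdx_add_one hj
        rw [← heq]
        have h8 : cs.length (cs.wordProd ρ₀) = ρ₀.length := hred
        omega
      · rw [← heq, cs.wordProd_append, cs.wordProd_singleton, hprod]




/-- One step of a (reversed) Bruhat chain: `a` is obtained from `b` by a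
length-decreasing right multiplication by a reflection. -/
def ChStep (a b : W) : Prop :=
  ∃ t, cs.IsReflection t ∧ a = b * t ∧ cs.length a < cs.length b

/-- The Bruhat chain order. -/
def Ch (u x : W) : Prop := Relation.ReflTransGen (ChStep cs) u x

lemma Ch.refl' {u : W} : Ch cs u u := Relation.ReflTransGen.refl

lemma Ch.trans' {u v x : W} (h1 : Ch cs u v) (h2 : Ch cs v x) : Ch cs u x :=
  Relation.ReflTransGen.trans h1 h2

lemma ch_step {x t : W} (ht : cs.IsReflection t) (hl : cs.length (x * t) < cs.length x) :
    Ch cs (x * t) x :=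
  Relation.ReflTransGen.single ⟨t, ht, rfl, hl⟩

lemma ch_step_left {i : B} {x : W} (hl : cs.length (cs.simple i * x) < cs.length x) :
    Ch cs (cs.simple i * x) x := by
  have ht : cs.IsReflection (x⁻¹ * cs.simple i * x) := by
    have := (cs.isReflection_simple i).conj x⁻¹
    simpa using this
  have hx : cs.simple i * x = x * (x⁻¹ * cs.simple i * x) := by group
  rw [hx] at hl ⊢
  exact ch_step cs ht hl

lemma ch_step_left_up {i : B} {x : W} (hl : cs.length x < cs.length (cs.simple i * x)) :
    Ch cs x (cs.simple i * x) := by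
  have ht : cs.IsReflection (x⁻¹ * cs.simple i * x) := by
    have := (cs.isReflection_simple i).conj x⁻¹
    simpa using this
  have heq : (cs.simple i * x) * (x⁻¹ * cs.simple i * x) = x := by
    have h := cs.simple_mul_simple_self i
    calc (cs.simple i * x) * (x⁻¹ * cs.simple i * x) = cs.simple i * (cs.simple i * x) := by group
      _ = x := by rw [← mul_assoc, h, one_mul]
  nth_rw 1 [← heq]
  exact ch_step cs ht (by rw [heq]; exact hl)

lemma ch_inv {u x : W} (h : Ch cs u x) : Ch cs u⁻¹ x⁻¹ := by
  induction h with
  | refl => exact Ch.refl' cs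
  | tail hb hstep ih =>
    rename_i b c _
    obtain ⟨t, ht, hbc, hlt⟩ := hstep
    refine Ch.trans' cs ih (Relation.ReflTransGen.single ⟨c * t * c⁻¹, ht.conj c, ?_, ?_⟩)
    · have hti : t⁻¹ = t := ht.inv
      rw [hbc, mul_inv_rev, hti]
      simp [mul_assoc]
      rw [← mul_assoc, ht.mul_self, one_mul]
    · rw [cs.length_inv, cs.length_inv]
      exact hlt




/-- The one-step left descent operation `U_s ↓ v`. -/
noncomputable def dL (i : B) (x : W) : W :=
  if cs.length (cs.simple i * x) < cs.length x then cs.simple i * x else x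

lemma dL_le (i : B) (y : W) : Ch cs (dL cs i y) y := by
  unfold dL
  split
  · exact ch_step_left cs (by assumption)
  · exact Ch.refl' cs

lemma length_simple_mul_simple (i : B) (y : W) :
    cs.simple i * (cs.simple i * y) = y := by
  rw [← mul_assoc, cs.simple_mul_simple_self, one_mul]

/-- Monotonicity of `U_s ↓ ·` along the chain order. -/
theorem Lmin (i : B) : ∀ n y, cs.length y ≤ n → ∀ v : W, Ch cs v y →
    Ch cs (dL cs i v) (dL cs i y) := by
  intro n
  induction n using Nat.strong_induction_on with
  | _ n IH =>
    intro y hy v hch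
    rcases Relation.ReflTransGen.cases_tail hch with heq | ⟨y', hch', hstep⟩
    · subst heq; exact Ch.refl' cs
    · obtain ⟨t, ht, hy't, hlt⟩ := hstep
      rcases cs.length_simple_mul y i with hA | hB
      · -- ascent at y: dL y = y
        have hdLy : dL cs i y = y := if_neg (by omega)
        rw [hdLy]
        have h1 : Ch cs (dL cs i v) (dL cs i y') :=
          IH (cs.length y') (by omega) y' le_rfl v hch'
        refine Ch.trans' cs (Ch.trans' cs h1 (dL_le cs i y')) ?_
        rw [hy't]
        exact ch_step cs ht (by rw [← hy't]; exact hlt)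
      · -- descent at y: dL y = s i y
        have hdLy : dL cs i y = cs.simple i * y := if_pos (by omega)
        rw [hdLy]
        have hdlsy : dL cs i (cs.simple i * y) = cs.simple i * y := by
          apply if_neg
          rw [length_simple_mul_simple]
          omega
        rcases cs.length_simple_mul y' i with hA' | hB'
        · -- ascent at y': exchange exclusion
          obtain ⟨ρ, hρlen, hρprod⟩ := cs.exists_reduced_word (cs.simple i * y)
          have hπσ : cs.wordProd (i :: ρ) = y := by
            rw [cs.wordProd_cons, ← hρprod, length_simple_mul_simple]
          have hl2 : cs.length (cs.wordProd (i :: ρ) * t) < cs.length (cs.wordProd (i :: ρ)) := by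
            rw [hπσ, ← hy't]; exact hlt
          obtain ⟨j, hj, heq⟩ := strong_exchange_right cs (i :: ρ) ht hl2
          rw [hπσ, ← hy't] at heq
          cases j with
          | zero =>
            -- y' = s i * y
            have hyt : y' = cs.simple i * y := by
              rw [heq]
              show cs.wordProd ρ = _
              rw [← hρprod]
            rw [hyt] at hch'
            have h2 := IH (cs.length (cs.simple i * y)) (by omega) _ le_rfl v hch'
            rwa [hdlsy] at h2
          | succ k =>
            have hk : k < ρ.length := by
              simp only [List.length_cons] at hj
              omega
            have hsiy' : cs.simple i * y' = cs.wordProd (ρ.eraseIdx k) := by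
              rw [heq]
              show cs.simple i * cs.wordProd (i :: ρ.eraseIdx k) = _
              rw [cs.wordProd_cons, length_simple_mul_simple]
            have hlen0 := cs.length_wordProd_le (ρ.eraseIdx k)
            have hlen1 := List.length_eraseIdx_add_one hk
            have hlρ : ρ.length = cs.length (cs.simple i * y) := by rw [hρprod]; exact hρlen.symm
            have hlen' : cs.length (cs.simple i * y') < cs.length (cs.simple i * y) := by
              rw [hsiy']
              omega
            -- the reflection realizing the step s i y' = (s i y) * t''
            have hmem : (cs.rightInvSeq ρ).getD k 1 ∈ cs.rightInvSeq ρ := by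
              rw [List.getD_eq_getElem _ 1 (by simpa using hk)]
              exact List.getElem_mem _
            have ht'' := cs.isReflection_of_mem_rightInvSeq ρ hmem
            have h8 : (cs.simple i * y) * ((cs.rightInvSeq ρ).getD k 1) = cs.simple i * y' := by
              rw [hρprod, cs.wordProd_mul_getD_rightInvSeq, ← hsiy']
            have hstep2 : Ch cs (cs.simple i * y') (cs.simple i * y) := by
              rw [← h8]
              exact ch_step cs ht'' (by rw [h8]; exact hlen')
            have hup : Ch cs y' (cs.simple i * y') := ch_step_left_up cs (by omega)
            have hvsy : Ch cs v (cs.simple i * y) :=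
              Ch.trans' cs (Ch.trans' cs hch' hup) hstep2
            have h2 := IH (cs.length (cs.simple i * y)) (by omega) _ le_rfl v hvsy
            rwa [hdlsy] at h2
        · -- descent at y' too
          have h1 := IH (cs.length y') (by omega) y' le_rfl v hch'
          have hdLy' : dL cs i y' = cs.simple i * y' := if_pos (by omega)
          rw [hdLy'] at h1
          refine Ch.trans' cs h1 ?_
          have h9 : cs.simple i * y' = (cs.simple i * y) * t := by rw [hy't]; group
          rw [h9]
          exact ch_step cs ht (by rw [← h9]; omega)

/-- Left multiplication lemma ("Z-property"). -/
theorem chainLZ (i : B) : ∀ n y, cs.length y ≤ n →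
    cs.length (cs.simple i * y) = cs.length y + 1 → ∀ v : W, Ch cs v y →
    Ch cs (cs.simple i * v) (cs.simple i * y) := by
  intro n
  induction n using Nat.strong_induction_on with
  | _ n IH =>
    intro y hy hA v hch
    rcases Relation.ReflTransGen.cases_tail hch with heq | ⟨y', hch', hstep⟩
    · subst heq; exact Ch.refl' cs
    · obtain ⟨t, ht, hy't, hlt⟩ := hstep
      have h9 : cs.simple i * y' = (cs.simple i * y) * t := by rw [hy't]; group
      rcases cs.length_simple_mul y' i with hA' | hB'
      · -- ascent at y'
        have h1 := IH (cs.length y') (by omega) y' le_rfl hA' v hch'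
        refine Ch.trans' cs h1 ?_
        rw [h9]
        exact ch_step cs ht (by rw [← h9]; omega)
      · -- descent at y'
        have h1 := Lmin cs i (cs.length y') y' le_rfl v hch'
        have hdLy' : dL cs i y' = cs.simple i * y' := if_pos (by omega)
        rw [hdLy'] at h1
        rcases cs.length_simple_mul v i with hAv | hBv
        · -- ascent at v : dL v = v
          have hdLv : dL cs i v = v := if_neg (by omega)
          rw [hdLv] at h1
          -- apply LZ-IH at s i * y'
          have h2 := IH (cs.length (cs.simple i * y')) (by omega) (cs.simple i * y') le_rfl
            (by rw [length_simple_mul_simple]; omega) v h1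
          rw [length_simple_mul_simple] at h2
          -- now Ch (s i v) y' ; then y' → y → s i y
          refine Ch.trans' cs h2 (Ch.trans' cs ?_ (ch_step_left_up cs (by omega)))
          rw [hy't]
          exact ch_step cs ht (by rw [← hy't]; exact hlt)
        · -- descent at v : dL v = s i v
          have hdLv : dL cs i v = cs.simple i * v := if_pos (by omega)
          rw [hdLv] at h1
          refine Ch.trans' cs h1 ?_
          rw [h9]
          exact ch_step cs ht (by rw [← h9]; omega)


/-- P2: chain order implies reduced subwords of every reduced word. -/
lemma chain_subword : ∀ n x, cs.length x ≤ n → ∀ u, Ch cs u x →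
    ∀ σ : List B, cs.IsReduced σ → cs.wordProd σ = x →
    ∃ σ', σ'.Sublist σ ∧ cs.IsReduced σ' ∧ cs.wordProd σ' = u := by
  intro n
  induction n using Nat.strong_induction_on with
  | _ n IH =>
    intro x hx u hch σ hσred hσprod
    rcases Relation.ReflTransGen.cases_tail hch with heq | ⟨y, hch', hstep⟩
    · subst heq; exact ⟨σ, List.Sublist.refl σ, hσred, hσprod⟩
    · obtain ⟨t, ht, hyx, hlt⟩ := hstep
      obtain ⟨j, hj, heq⟩ := strong_exchange_right cs σ ht (by rw [hσprod, ← hyx]; exact hlt)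
      obtain ⟨ρ, hρsub, hρred, hρprod⟩ := deletion cs (σ.eraseIdx j)
      have hπρ : cs.wordProd ρ = y := by rw [hρprod, ← heq, hσprod, ← hyx]
      obtain ⟨σ', hsub', hred', hprod'⟩ := IH (cs.length y) (by omega) y le_rfl u hch' ρ hρred hπρ
      exact ⟨σ', hsub'.trans (hρsub.trans (σ.eraseIdx_sublist j)), hred', hprod'⟩

/-- P1: a sublist of a reduced word is below it in the chain order. -/
lemma sublist_chain : ∀ ω : List B, cs.IsReduced ω → ∀ ω', ω'.Sublist ω →
    Ch cs (cs.wordProd ω') (cs.wordProd ω) := by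
  intro ω
  induction ω with
  | nil =>
    intro _ ω' hsub
    rw [List.sublist_nil.mp hsub]
    exact Ch.refl' cs
  | cons c ω₀ ih =>
    intro hred ω' hsub
    have hred₀ : cs.IsReduced ω₀ := by
      have h := hred.drop (j := 1)
      simpa using h
    have hasc : cs.length (cs.simple c * cs.wordProd ω₀) = cs.length (cs.wordProd ω₀) + 1 := by
      have h1 : cs.length (cs.wordProd (c :: ω₀)) = (c :: ω₀).length := hred
      rw [cs.wordProd_cons] at h1
      have h2 : cs.length (cs.wordProd ω₀) = ω₀.length := hred₀
      simp only [List.length_cons] at h1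
      omega
    rcases List.sublist_cons_iff.mp hsub with h | ⟨r, rfl, hr⟩
    · refine Ch.trans' cs (ih hred₀ ω' h) ?_
      rw [cs.wordProd_cons]
      exact ch_step_left_up cs (by omega)
    · rw [cs.wordProd_cons, cs.wordProd_cons]
      exact chainLZ cs c (cs.length (cs.wordProd ω₀)) _ le_rfl hasc _ (ih hred₀ r hr)

/-- The Bruhat order coincides with the chain order. -/
lemma bruhatLE_iff_ch {u x : W} : BruhatLE cs u x ↔ Ch cs u x := by
  constructor
  · rintro ⟨ω, hred, hprod, ω', hsub, hred', hprod'⟩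
    rw [← hprod, ← hprod']
    exact sublist_chain cs ω hred ω' hsub
  · intro h
    obtain ⟨σ', hsub, hred', hprod'⟩ := chain_subword cs (cs.length x) x le_rfl u h
      (rword cs x) (rword_isReduced cs x) (rword_wordProd cs x)
    exact ⟨rword cs x, rword_isReduced cs x, rword_wordProd cs x, σ', hsub, hred', hprod'⟩

/-- The one-step right descent operation `v ↓ U_s`. -/
noncomputable def dR (i : B) (x : W) : W :=
  if cs.length (x * cs.simple i) < cs.length x then x * cs.simple i else x

lemma dL_inv (i : B) (x : W) : dL cs i x⁻¹ = (dR cs i x)⁻¹ := by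
  unfold dL dR
  have hlen : cs.length (cs.simple i * x⁻¹) = cs.length (x * cs.simple i) := by
    rw [← cs.length_inv (x * cs.simple i), mul_inv_rev, cs.inv_simple]
  rw [hlen, cs.length_inv]
  split
  · rw [mul_inv_rev, cs.inv_simple]
  · rfl

lemma Rmin (i : B) {v y : W} (h : Ch cs v y) : Ch cs (dR cs i v) (dR cs i y) := by
  have h1 := Lmin cs i (cs.length y⁻¹) y⁻¹ le_rfl v⁻¹ (ch_inv cs h)
  rw [dL_inv, dL_inv] at h1
  have h2 := ch_inv cs h1
  simpa using h2

lemma downLWord_mono (ω : List B) {u x : W} (h : Ch cs u x) :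
    Ch cs (downLWord cs ω u) (downLWord cs ω x) := by
  induction ω with
  | nil => exact h
  | cons i ω ih =>
    show Ch cs (dL cs i (downLWord cs ω u)) (dL cs i (downLWord cs ω x))
    exact Lmin cs i _ _ le_rfl _ ih

lemma downRWord_mono (ω : List B) : ∀ u x : W, Ch cs u x →
    Ch cs (downRWord cs u ω) (downRWord cs x ω) := by
  induction ω with
  | nil => intro u x h; exact h
  | cons i ω ih =>
    intro u x h
    show Ch cs (downRWord cs (dR cs i u) ω) (downRWord cs (dR cs i x) ω)
    exact ih _ _ (Rmin cs i h)


end BruhatAux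

/-- If `x ≥ u` then `U_w ↓ x ≥ U_w ↓ u` and `x ↓ U_w ≥ u ↓ U_w`. -/
theorem stmt3 [Finite W] (x u w : W) (h : BruhatLE cs u x) :
    BruhatLE cs (downL cs w u) (downL cs w x) ∧ BruhatLE cs (downR cs u w) (downR cs x w) := by
  classical
  have h' := (bruhatLE_iff_ch cs).mp h
  constructor
  · exact (bruhatLE_iff_ch cs).mpr (downLWord_mono cs (rword cs w) h')
  · exact (bruhatLE_iff_ch cs).mpr (downRWord_mono cs (rword cs w) u x h')

end PaperBase
end

section
/- Let W be a finite Coxeter group. If u', u, w ∈ W and u' ≤_R u in the right weak Bruhat order, then u' ↓ U_w ≤_R u. -/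
open Polynomial

namespace PaperBase

variable {B : Type*} {W : Type*} [Group W] {M : CoxeterMatrix B} (cs : CoxeterSystem M W)

theorem rweakLE_trans' (a b c : W) (h1 : RWeakLE cs a b) (h2 : RWeakLE cs b c) :
    RWeakLE cs a c := by
  unfold RWeakLE at *
  have h3 := cs.length_mul_le (a⁻¹ * b) (b⁻¹ * c)
  have h4 := cs.length_mul_le a (a⁻¹ * c)
  simp only [mul_assoc, mul_inv_cancel_left] at h3 h4
  omega

theorem rweakLE_step (x : W) (i : B) (hx : cs.length (x * cs.simple i) < cs.length x) :
    RWeakLE cs (x * cs.simple i) x := by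
  unfold RWeakLE
  have h1 := cs.length_mul_simple x i
  have h2 : (x * cs.simple i)⁻¹ * x = cs.simple i := by
    simp [mul_inv_rev, mul_assoc, cs.inv_simple]
  rw [h2, cs.length_simple]
  omega

theorem downRWord_rweakLE (ω : List B) (u' u : W) (h : RWeakLE cs u' u) :
    RWeakLE cs (downRWord cs u' ω) u := by
  induction ω generalizing u' with
  | nil => exact h
  | cons i t ih =>
    show RWeakLE cs (downRWord cs _ t) u
    by_cases hc : cs.length (u' * cs.simple i) < cs.length u'
    · simp only [downRWord, List.foldl_cons, if_pos hc]
      exact ih _ (rweakLE_trans' cs _ _ _ (rweakLE_step cs u' i hc) h)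
    · simp only [downRWord, List.foldl_cons, if_neg hc]
      exact ih _ h


/-- If `u' ≤_R u` in the right weak order then `u' ↓ U_w ≤_R u`. -/
theorem stmt6 [Finite W] (u' u w : W) (h : RWeakLE cs u' u) :
    RWeakLE cs (downR cs u' w) u := by
  exact downRWord_rweakLE cs (rword cs w) u' u h

end PaperBase
end
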